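/- arXiv:math/0508315 — 6 statements merged into one kernel-verified Lean document; each statement's English description precedes it below -/
import Mathlib

section
/- The unique entire solution Φ of the Poincaré functional equation Φ(λz) = p(Φ(z)) with Φ(0) = 0, Φ'(0) = 1 is an entire function of growth order at most ρ = log d / log λ; more precisely, there exist constants A > 0 and B > 0 such that |Φ(z)| ≤ A·exp(B·|z|^ρ) for all z ∈ ℂ. -/
/-!
Let `K` dominate both the coefficient sum of `p` and `‖Φ‖` on the unit disc. The functional
equation gives `‖Φ(λz)‖ ≤ K · max(1, ‖Φ z‖)^d`, and since `d ≥ 2` this makes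
`w = K · max(1, ‖Φ‖)` satisfy `w(λz) ≤ w(z)^d`; hence `‖Φ‖ ≤ (K²)^(dⁿ)` on the disc of
radius `λⁿ`.
As `λ^ρ = d`, taking `n` with `λⁿ⁻¹ ≤ max(1, ‖z‖) < λⁿ` gives `dⁿ ≤ d (1 + ‖z‖^ρ)`, and the
doubly exponential bound in `n` becomes `exp(B ‖z‖^ρ)`.
-/

theorem Polynomial.norm_aeval_le_mul_max_one_pow {𝕜 A : Type*} [NormedField 𝕜] [SeminormedRing A]
    [NormOneClass A] [NormedAlgebra 𝕜 A] (p : Polynomial 𝕜) (x : A) :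
    ‖Polynomial.aeval x p‖ ≤
      (∑ i ∈ Finset.range (p.natDegree + 1), ‖p.coeff i‖) * max 1 ‖x‖ ^ p.natDegree := by
  rw [Polynomial.aeval_eq_sum_range, Finset.sum_mul]
  refine (norm_sum_le _ _).trans (Finset.sum_le_sum fun i hi => ?_)
  calc ‖p.coeff i • x ^ i‖ ≤ ‖p.coeff i‖ * ‖x‖ ^ i :=
        (norm_smul_le _ _).trans (mul_le_mul_of_nonneg_left (norm_pow_le x i) (norm_nonneg _))
    _ ≤ ‖p.coeff i‖ * max 1 ‖x‖ ^ p.natDegree := by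
        gcongr
        exact (pow_le_pow_left₀ (norm_nonneg x) (le_max_right _ _) i).trans
          (pow_le_pow_right₀ (le_max_left _ _) (Finset.mem_range_succ_iff.mp hi))

theorem mul_max_one_le_mul_max_one_pow {C K x y : ℝ} {d : ℕ} (hd : 2 ≤ d) (hK : 1 ≤ K)
    (hCK : C ≤ K) (hy : y ≤ C * max 1 x ^ d) : K * max 1 y ≤ (K * max 1 x) ^ d := by
  have hKx : 1 ≤ K * max 1 x ^ d :=
    one_le_mul_of_one_le_of_one_le hK (one_le_pow₀ (le_max_left _ _))
  calc K * max 1 y ≤ K * (K * max 1 x ^ d) := by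
        gcongr
        exact max_le hKx (hy.trans (by gcongr))
    _ = K ^ 2 * max 1 x ^ d := by ring
    _ ≤ K ^ d * max 1 x ^ d := by gcongr
    _ = (K * max 1 x) ^ d := (mul_pow _ _ _).symm

theorem apply_le_pow_pow_of_apply_smul_le_pow {E : Type*} [SeminormedAddCommGroup E]
    [NormedSpace ℝ E] {f : E → ℝ} {lam a : ℝ} {d : ℕ} (hlam : 0 < lam) (hf : ∀ z, 0 ≤ f z)
    (hstep : ∀ z, f (lam • z) ≤ f z ^ d) (hball : ∀ z, ‖z‖ ≤ 1 → f z ≤ a) (n : ℕ) (z : E)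
    (hz : ‖z‖ ≤ lam ^ n) : f z ≤ a ^ d ^ n := by
  induction n generalizing z with
  | zero => simpa using hball z (by simpa using hz)
  | succ n ih =>
    have hz' : ‖lam⁻¹ • z‖ ≤ lam ^ n := by
      rwa [norm_smul, Real.norm_of_nonneg (inv_nonneg.2 hlam.le), inv_mul_le_iff₀ hlam,
        ← pow_succ']
    calc f z = f (lam • lam⁻¹ • z) := by rw [smul_inv_smul₀ hlam.ne']
      _ ≤ f (lam⁻¹ • z) ^ d := hstep _
      _ ≤ (a ^ d ^ n) ^ d := pow_le_pow_left₀ (hf _) (ih _ hz') d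
      _ = a ^ d ^ (n + 1) := by rw [← pow_mul, ← pow_succ]

theorem exists_le_pow_and_pow_le_mul_one_add_rpow_logb {lam d x : ℝ} (hlam : 1 < lam)
    (hd : 1 ≤ d) (hx : 0 ≤ x) :
    ∃ n : ℕ, x ≤ lam ^ n ∧ d ^ n ≤ d * (1 + x ^ Real.logb lam d) := by
  obtain ⟨n, hn, hn1⟩ := exists_nat_pow_near (le_max_left 1 x) hlam
  refine ⟨n + 1, (le_max_right 1 x).trans hn1.le, ?_⟩
  have hρ : 0 ≤ Real.logb lam d := Real.logb_nonneg hlam hd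
  calc d ^ (n + 1) = d * (lam ^ n) ^ Real.logb lam d := by
        rw [← Real.rpow_natCast lam n, ← Real.rpow_mul (by positivity), mul_comm (n : ℝ),
          Real.rpow_mul (by positivity), Real.rpow_logb (by positivity) hlam.ne' (by positivity),
          Real.rpow_natCast, pow_succ']
    _ ≤ d * max 1 x ^ Real.logb lam d := by gcongr
    _ ≤ d * (1 + x ^ Real.logb lam d) := by
        have := Real.rpow_nonneg hx (Real.logb lam d)
        gcongr
        rcases max_cases 1 x with ⟨h, _⟩ | ⟨h, _⟩ <;> rw [h]
        · rw [Real.one_rpow]; linarith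
        · linarith

theorem exists_norm_le_mul_exp_mul_rpow_logb {E F : Type*} [SeminormedAddGroup E] [Norm F]
    {f : E → F} {lam K : ℝ} {d : ℕ} (hlam : 1 < lam) (hd : 1 ≤ d) (hK : 1 < K)
    (hf : ∀ n : ℕ, ∀ z, ‖z‖ ≤ lam ^ n → ‖f z‖ ≤ K ^ d ^ n) :
    ∃ A > (0 : ℝ), ∃ B > (0 : ℝ), ∀ z, ‖f z‖ ≤ A * Real.exp (B * ‖z‖ ^ Real.logb lam d) := by
  have hlogK : 0 < Real.log K := Real.log_pos hK
  have hK0 : 0 < K := zero_lt_one.trans hK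
  refine ⟨K ^ d, by positivity, d * Real.log K, by positivity, fun z => ?_⟩
  obtain ⟨n, hzn, hdn⟩ := exists_le_pow_and_pow_le_mul_one_add_rpow_logb hlam
    (Nat.one_le_cast.2 hd) (norm_nonneg z)
  calc ‖f z‖ ≤ K ^ d ^ n := hf n z hzn
    _ = Real.exp ((d : ℝ) ^ n * Real.log K) := by
        rw [← Nat.cast_pow, ← Real.log_pow, Real.exp_log (by positivity)]
    _ ≤ Real.exp (d * (1 + ‖z‖ ^ Real.logb lam d) * Real.log K) := by gcongr
    _ = K ^ d * Real.exp (d * Real.log K * ‖z‖ ^ Real.logb lam d) := by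
        rw [← Real.exp_log (pow_pos hK0 d), Real.log_pow, ← Real.exp_add]
        ring_nf

theorem exists_norm_le_pow_pow_of_apply_mul_eq_aeval {p : Polynomial ℝ} {d : ℕ} {lam : ℝ}
    (hd : 2 ≤ d) (hdeg : p.natDegree = d) (hlam : 0 < lam) {Φ : ℂ → ℂ} (hΦ : Continuous Φ)
    (hfe : ∀ z : ℂ, Φ (lam * z) = Polynomial.aeval (Φ z) p) :
    ∃ K > (1 : ℝ), ∀ n : ℕ, ∀ z : ℂ, ‖z‖ ≤ lam ^ n → ‖Φ z‖ ≤ K ^ d ^ n := by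
  obtain ⟨M, hM⟩ := (isCompact_closedBall (0 : ℂ) 1).exists_bound_of_continuousOn hΦ.continuousOn
  set C := ∑ i ∈ Finset.range (d + 1), ‖p.coeff i‖
  set K := max 2 (max C M)
  have hK : 1 ≤ K := le_max_of_le_left one_le_two
  have hp : ∀ w : ℂ, ‖Polynomial.aeval w p‖ ≤ C * max 1 ‖w‖ ^ d := by
    simpa only [hdeg] using p.norm_aeval_le_mul_max_one_pow
  have hstep (z : ℂ) : K * max 1 ‖Φ (lam • z)‖ ≤ (K * max 1 ‖Φ z‖) ^ d :=
    mul_max_one_le_mul_max_one_pow hd hK (le_max_of_le_right (le_max_left _ _))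
      (by rw [Complex.real_smul, hfe]; exact hp _)
  have hball (z : ℂ) (hz : ‖z‖ ≤ 1) : K * max 1 ‖Φ z‖ ≤ K ^ 2 := by
    rw [sq]
    refine mul_le_mul_of_nonneg_left (max_le hK ?_) (by positivity)
    exact (hM z (by simpa using hz)).trans (le_max_of_le_right (le_max_right _ _))
  refine ⟨K ^ 2, one_lt_pow₀ (one_lt_two.trans_le (le_max_left _ _)) two_ne_zero,
    fun n z hz => ?_⟩
  calc ‖Φ z‖ ≤ max 1 ‖Φ z‖ := le_max_right _ _
    _ ≤ K * max 1 ‖Φ z‖ := le_mul_of_one_le_left (by positivity) hK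
    _ ≤ (K ^ 2) ^ d ^ n :=
        apply_le_pow_pow_of_apply_smul_le_pow hlam (fun _ => by positivity) hstep hball n z hz

theorem poincare_function_growth_order_general
    (p : Polynomial ℝ) (d : ℕ) (lam : ℝ)
    (hd : 2 ≤ d) (hdeg : p.natDegree = d)
    (hlam : 1 < lam)
    (Φ : ℂ → ℂ) (hΦ : Differentiable ℂ Φ)
    (hfe : ∀ z : ℂ, Φ (lam * z) = Polynomial.aeval (Φ z) p) :
    ∃ A > (0 : ℝ), ∃ B > (0 : ℝ), ∀ z : ℂ,
      ‖Φ z‖ ≤ A * Real.exp (B * ‖z‖ ^ (Real.log d / Real.log lam)) := by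
  obtain ⟨K, hK, hΦK⟩ := exists_norm_le_pow_pow_of_apply_mul_eq_aeval hd hdeg
    (zero_lt_one.trans hlam) hΦ.continuous hfe
  exact exists_norm_le_mul_exp_mul_rpow_logb hlam (one_le_two.trans hd) hK hΦK

/-- The unique entire solution `Φ` of the Poincaré functional equation
`Φ(λz) = p(Φ(z))`, `Φ(0) = 0`, `Φ'(0) = 1` has growth order at most `ρ = log d / log λ`:
there are constants `A, B > 0` with `|Φ(z)| ≤ A · exp(B · |z|^ρ)` for all `z`. -/
theorem poincare_function_growth_order
    (p : Polynomial ℝ) (d : ℕ) (lam : ℝ)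
    (hd : 2 ≤ d) (hdeg : p.natDegree = d)
    (hc0 : p.coeff 0 = 0) (hc1 : p.coeff 1 = lam) (hlam : 1 < lam)
    (Φ : ℂ → ℂ) (hΦ : Differentiable ℂ Φ)
    (hfe : ∀ z : ℂ, Φ (lam * z) = Polynomial.aeval (Φ z) p)
    (hΦ0 : Φ 0 = 0) (hΦ'0 : deriv Φ 0 = 1) :
    ∃ A > (0 : ℝ), ∃ B > (0 : ℝ), ∀ z : ℂ,
      ‖Φ z‖ ≤ A * Real.exp (B * ‖z‖ ^ (Real.log d / Real.log lam)) :=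
  poincare_function_growth_order_general p d lam hd hdeg hlam Φ hΦ hfe
end

section
/- If the basin of attraction F_∞ of ∞ of p contains the angular region W_β for some β > 0, then for every ε with 0 < ε < β one has |Φ(z)| → ∞ as |z| → ∞ uniformly on the sector {z ≠ 0 : |arg z| ≤ β − ε}; moreover, for every K > 1 there exists a constant C > 0 such that |Φ(z)| ≥ C·|z|^K for all z ≠ 0 with |arg z| ≤ β − ε. -/
/-!
Near `0` the Poincaré function is a perturbation of the identity: `Φ w = w * u w` with
`u = dslope Φ 0` continuous and `u 0 = Φ'(0) = 1`, so `arg (Φ w)` is close to `arg w`. Hence `Φ`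
maps the small points of the closed sector `|arg z| ≤ β - ε` into `W_β ⊆ F_∞`, and the functional
equation `Φ (λⁿ z) = pⁿ (Φ z)` with the forward invariance of `F_∞` puts `Φ z` in `F_∞`, in
particular `Φ z ≠ 0`, on the whole sector.

Since `p 0 = 0` and `deg p ≥ 2`, `|p w| ≥ λ^K |w|` once `|w| > M`; by compactness, the `N`-th
iterate of `p` sends all of `Φ` of the shell `1 ≤ |w| ≤ λ` of the sector beyond `M`. Writing
`z = λᵏ w` with `w` in the shell then gives `|Φ z| ≥ λ^(K (k - N)) ≳ |z|^K`. On the bounded part of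
the sector, `|Φ z| / |z| = |u z|` is continuous and nonvanishing, hence bounded below, which
suffices there because `K > 1`.
-/

open Filter Topology

/-- The basin of attraction of `∞` of the polynomial `p`: the set of complex numbers whose
orbit under iteration of `p` tends to infinity. -/
def polyBasin (p : Polynomial ℝ) : Set ℂ :=
  {z : ℂ | Tendsto (fun n : ℕ => ‖(fun w : ℂ => Polynomial.aeval w p)^[n] z‖)
    atTop atTop}

open Set Metric Complex Polynomial

theorem IsCompact.exists_mapsTo_iterate {X : Type*} [TopologicalSpace X] {f : X → X}
    {K T : Set X} (hK : IsCompact K) (hf : Continuous f) (hT : IsOpen T) (hfT : MapsTo f T T)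
    (hKT : ∀ x ∈ K, ∃ n, f^[n] x ∈ T) : ∃ N, MapsTo f^[N] K T := by
  have hmono : Monotone fun n => f^[n] ⁻¹' T := monotone_nat_of_le_succ fun n x hx => by
    simpa only [mem_preimage, Function.iterate_succ_apply'] using hfT hx
  exact hK.elim_directed_cover _ (fun n => hT.preimage (hf.iterate n))
    (fun x hx => mem_iUnion.2 (hKT x hx)) hmono.directed_le

section Growth

variable {E : Type*} [SeminormedAddCommGroup E] {f : E → E} {M c : ℝ}

theorem mapsTo_setOf_lt_norm (hc : 1 ≤ c) (hf : ∀ v, M < ‖v‖ → c * ‖v‖ ≤ ‖f v‖) :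
    MapsTo f {v | M < ‖v‖} {v | M < ‖v‖} := fun v hv =>
  hv.trans_le <| (le_mul_of_one_le_left (norm_nonneg v) hc).trans (hf v hv)

theorem pow_mul_norm_le_norm_iterate (hc : 1 ≤ c) (hf : ∀ v, M < ‖v‖ → c * ‖v‖ ≤ ‖f v‖)
    {v : E} (hv : M < ‖v‖) (n : ℕ) : c ^ n * ‖v‖ ≤ ‖f^[n] v‖ := by
  induction n with
  | zero => simp
  | succ n ih =>
    rw [Function.iterate_succ_apply', pow_succ', mul_assoc]
    exact (mul_le_mul_of_nonneg_left ih (by linarith)).trans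
      (hf _ (((mapsTo_setOf_lt_norm hc hf).iterate n) hv))

end Growth

theorem iterate_mem_polyBasin {p : ℝ[X]} {u : ℂ} (hu : u ∈ polyBasin p) (n : ℕ) :
    (fun w : ℂ => aeval w p)^[n] u ∈ polyBasin p := by
  simp only [polyBasin, mem_ofPred_eq, ← Function.iterate_add_apply]
  exact (tendsto_add_atTop_iff_nat n).2 hu

theorem ne_zero_of_mem_polyBasin {p : ℝ[X]} (hp : p.coeff 0 = 0) {u : ℂ}
    (hu : u ∈ polyBasin p) : u ≠ 0 := by
  rintro rfl
  have hfix (n : ℕ) : (fun w : ℂ => aeval w p)^[n] 0 = 0 :=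
    Function.iterate_fixed (by simp [← coeff_zero_eq_aeval_zero', hp]) n
  simp only [polyBasin, mem_ofPred_eq, hfix, norm_zero] at hu
  exact not_tendsto_const_atTop _ _ hu

theorem Polynomial.exists_mul_norm_le_norm_aeval {p : ℝ[X]} (hp : p.coeff 0 = 0)
    (hdeg : 2 ≤ p.natDegree) (c : ℝ) :
    ∃ M, ∀ w : ℂ, M < ‖w‖ → c * ‖w‖ ≤ ‖aeval w p‖ := by
  obtain ⟨q, rfl⟩ := X_dvd_iff.2 hp
  have hq : q ≠ 0 := by rintro rfl; simp at hdeg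
  have hqdeg : 0 < (q.map (algebraMap ℝ ℂ)).degree := by
    rw [degree_map, natDegree_X_mul hq] at *
    exact natDegree_pos_iff_degree_pos.1 (by omega)
  have htend := (q.map (algebraMap ℝ ℂ)).tendsto_norm_atTop hqdeg tendsto_norm_cobounded_atTop
  obtain ⟨M, -, hM⟩ := hasBasis_cobounded_norm.eventually_iff.1 (htend.eventually_ge_atTop c)
  refine ⟨M, fun w hw => ?_⟩
  rw [map_mul, aeval_X, norm_mul, aeval_def, eval₂_eq_eval_map, mul_comm c]
  exact mul_le_mul_of_nonneg_left (hM hw.le) (norm_nonneg w)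

open Real in
theorem Complex.abs_arg_mul_le (w u : ℂ) : |arg (w * u)| ≤ |arg w| + |arg u| := by
  rcases eq_or_ne w 0 with rfl | hw
  · simp
  rcases eq_or_ne u 0 with rfl | hu
  · simp
  by_cases h : arg w + arg u ∈ Ioc (-π) π
  · rw [arg_mul hw hu h]
    exact abs_add_le _ _
  · have hπ : π ≤ |arg w + arg u| := by
      rw [mem_Ioc, not_and_or, not_lt, not_le] at h
      rcases h with h | h
      · exact le_abs.2 (Or.inr (by linarith))
      · exact le_abs.2 (Or.inl h.le)
    exact (abs_arg_le_pi _).trans (hπ.trans (abs_add_le _ _))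

open Real in
theorem Complex.abs_arg_le_iff_norm_mul_cos_le_re {γ : ℝ} (h0 : 0 ≤ γ) (hπ : γ ≤ π) (z : ℂ) :
    |arg z| ≤ γ ↔ ‖z‖ * Real.cos γ ≤ z.re := by
  rcases eq_or_ne z 0 with rfl | hz
  · simp [h0]
  rw [← norm_mul_cos_arg, ← Real.cos_abs (arg z), mul_le_mul_iff_right₀ (norm_pos_iff.2 hz),
    strictAntiOn_cos.le_iff_ge ⟨h0, hπ⟩ ⟨abs_nonneg _, abs_arg_le_pi z⟩]

theorem Complex.isClosed_setOf_abs_arg_le (γ : ℝ) : IsClosed {z : ℂ | |arg z| ≤ γ} := by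
  rcases lt_or_ge γ 0 with hγ | hγ
  · convert isClosed_empty
    exact eq_empty_of_forall_notMem fun z hz => (abs_nonneg (arg z)).not_gt (hz.trans_lt hγ)
  have hset : {z : ℂ | |arg z| ≤ γ} = {z : ℂ | ‖z‖ * Real.cos (min γ Real.pi) ≤ z.re} := by
    ext z
    rw [mem_ofPred_eq, mem_ofPred_eq,
      ← abs_arg_le_iff_norm_mul_cos_le_re (le_min hγ Real.pi_pos.le) (min_le_right _ _),
      le_min_iff, and_iff_left (abs_arg_le_pi z)]
  rw [hset]
  exact isClosed_le (by fun_prop) continuous_re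

theorem Real.rpow_le_rpow_sub_one_mul {t ρ K : ℝ} (ht : 0 ≤ t) (htρ : t ≤ ρ) (hK : 1 ≤ K) :
    t ^ K ≤ ρ ^ (K - 1) * t := by
  calc t ^ K = t ^ (K - 1) * t := by
        rw [← rpow_add_one' ht (by linarith), sub_add_cancel]
    _ ≤ ρ ^ (K - 1) * t := by gcongr

section Poincare

variable {p : ℝ[X]} {lam : ℝ} {Φ : ℂ → ℂ}

theorem apply_pow_mul_eq_iterate (hfe : ∀ z : ℂ, Φ (lam * z) = aeval (Φ z) p) (n : ℕ) (z : ℂ) :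
    Φ ((lam : ℂ) ^ n * z) = (fun w : ℂ => aeval w p)^[n] (Φ z) := by
  have hsemi : Function.Semiconj Φ ((lam : ℂ) * ·) (fun w : ℂ => aeval w p) := hfe
  rw [← mul_left_iterate_apply]
  exact hsemi.iterate_right n z

theorem eventually_ne_zero_and_abs_arg_lt (hΦ : DifferentiableAt ℂ Φ 0) (hΦ0 : Φ 0 = 0)
    (hΦ'0 : deriv Φ 0 = 1) {γ β : ℝ} (hγβ : γ < β) :
    ∀ᶠ w in 𝓝 0, w ≠ 0 → |arg w| ≤ γ → Φ w ≠ 0 ∧ |arg (Φ w)| < β := by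
  have hslope : Tendsto (dslope Φ 0) (𝓝 0) (𝓝 1) := by
    simpa [dslope_same, hΦ'0] using (continuousAt_dslope_same.2 hΦ).tendsto
  have harg : Tendsto (fun w => |arg (dslope Φ 0 w)|) (𝓝 0) (𝓝 0) := by
    simpa using ((continuousAt_arg (by simp)).tendsto.comp hslope).abs
  filter_upwards [hslope.eventually_ne one_ne_zero, harg.eventually_lt_const (sub_pos.2 hγβ)]
    with w hne hlt hw hwγ
  have hΦw : Φ w = w * dslope Φ 0 w := by
    simpa [hΦ0] using (sub_smul_dslope Φ 0 w).symm
  refine ⟨hΦw ▸ mul_ne_zero hw hne, ?_⟩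
  rw [hΦw]
  linarith [abs_arg_mul_le w (dslope Φ 0 w)]

theorem mem_polyBasin_of_abs_arg_le (hlam : 1 < lam) (hfe : ∀ z : ℂ, Φ (lam * z) = aeval (Φ z) p)
    (hΦ : DifferentiableAt ℂ Φ 0) (hΦ0 : Φ 0 = 0) (hΦ'0 : deriv Φ 0 = 1) {γ β : ℝ} (hγβ : γ < β)
    (hW : ∀ z : ℂ, z ≠ 0 → |arg z| < β → z ∈ polyBasin p) {z : ℂ} (hz : z ≠ 0)
    (hzγ : |arg z| ≤ γ) : Φ z ∈ polyBasin p := by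
  have hshrink : Tendsto (fun n : ℕ => ((lam⁻¹ ^ n : ℝ) : ℂ) * z) atTop (𝓝 0) := by
    simpa using ((continuous_ofReal.tendsto 0).comp (tendsto_pow_atTop_nhds_zero_of_lt_one
      (inv_nonneg.2 (by linarith)) (inv_lt_one_of_one_lt₀ hlam))).mul_const z
  obtain ⟨n, hn⟩ := (hshrink.eventually (eventually_ne_zero_and_abs_arg_lt hΦ hΦ0 hΦ'0 hγβ)).exists
  have hpos : 0 < lam⁻¹ ^ n := by positivity
  have harg : arg (((lam⁻¹ ^ n : ℝ) : ℂ) * z) = arg z := arg_real_mul z hpos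
  obtain ⟨hne, hlt⟩ := hn (mul_ne_zero (by exact_mod_cast hpos.ne') hz) (harg ▸ hzγ)
  have hz_eq : z = (lam : ℂ) ^ n * (((lam⁻¹ ^ n : ℝ) : ℂ) * z) := by
    have : (lam : ℂ) ≠ 0 := by exact_mod_cast (by linarith : lam ≠ 0)
    push_cast
    rw [← mul_assoc, ← mul_pow, mul_inv_cancel₀ this, one_pow, one_mul]
  rw [hz_eq, apply_pow_mul_eq_iterate hfe]
  exact iterate_mem_polyBasin (hW _ hne hlt) n

theorem exists_mul_norm_le_norm_of_isCompact (hΦc : Continuous Φ) (hΦ : DifferentiableAt ℂ Φ 0)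
    (hΦ0 : Φ 0 = 0) (hΦ'0 : deriv Φ 0 ≠ 0) {s : Set ℂ} (hs : IsCompact s)
    (hne : ∀ z ∈ s, z ≠ 0 → Φ z ≠ 0) : ∃ m > 0, ∀ z ∈ s, m * ‖z‖ ≤ ‖Φ z‖ := by
  have hΦ_eq (z : ℂ) : Φ z = z * dslope Φ 0 z := by
    simpa [hΦ0] using (sub_smul_dslope Φ 0 z).symm
  have hcont : Continuous (dslope Φ 0) := continuous_iff_continuousAt.2 fun z => by
    rcases eq_or_ne z 0 with rfl | hz
    · exact continuousAt_dslope_same.2 hΦ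
    · exact (continuousAt_dslope_of_ne hz).2 hΦc.continuousAt
  have hpos : ∀ z ∈ s, 0 < ‖dslope Φ 0 z‖ := fun z hz => by
    refine norm_pos_iff.2 ?_
    rcases eq_or_ne z 0 with rfl | hz0
    · rwa [dslope_same]
    · exact right_ne_zero_of_mul (hΦ_eq z ▸ hne z hz hz0)
  obtain ⟨m, hm, hmle⟩ := hs.exists_forall_le' hcont.norm.continuousOn hpos
  refine ⟨m, hm, fun z hz => ?_⟩
  rw [hΦ_eq, norm_mul, mul_comm m]
  exact mul_le_mul_of_nonneg_left (hmle z hz) (norm_nonneg z)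

theorem exists_mul_rpow_le_norm_of_norm_le (hΦ : Differentiable ℂ Φ) (hΦ0 : Φ 0 = 0)
    (hΦ'0 : deriv Φ 0 ≠ 0) {γ : ℝ} (hne : ∀ z : ℂ, z ≠ 0 → |arg z| ≤ γ → Φ z ≠ 0) {K : ℝ}
    (hK : 1 ≤ K) {ρ : ℝ} (hρ : 0 < ρ) :
    ∃ C > 0, ∀ z : ℂ, |arg z| ≤ γ → ‖z‖ ≤ ρ → C * ‖z‖ ^ K ≤ ‖Φ z‖ := by
  obtain ⟨m, hm, hmle⟩ := exists_mul_norm_le_norm_of_isCompact hΦ.continuous (hΦ 0) hΦ0 hΦ'0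
    ((isCompact_closedBall 0 ρ).inter_left (isClosed_setOf_abs_arg_le γ))
    (fun z hz hz0 => hne z hz0 hz.1)
  refine ⟨m / ρ ^ (K - 1), by positivity, fun z hzγ hzρ => ?_⟩
  calc m / ρ ^ (K - 1) * ‖z‖ ^ K ≤ m / ρ ^ (K - 1) * (ρ ^ (K - 1) * ‖z‖) := by
        gcongr
        exact Real.rpow_le_rpow_sub_one_mul (norm_nonneg z) hzρ hK
    _ = m * ‖z‖ := by field_simp
    _ ≤ ‖Φ z‖ := hmle z ⟨hzγ, mem_closedBall_zero_iff.2 hzρ⟩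

theorem exists_iterate_norm_gt_of_abs_arg_le (hΦ : Continuous Φ) {M c γ : ℝ} (hc : 1 ≤ c)
    (hM : ∀ v : ℂ, M < ‖v‖ → c * ‖v‖ ≤ ‖aeval v p‖)
    (hbasin : ∀ z : ℂ, z ≠ 0 → |arg z| ≤ γ → Φ z ∈ polyBasin p) {a : ℝ} (ha : 0 < a) (b : ℝ) :
    ∃ N : ℕ, ∀ w : ℂ, |arg w| ≤ γ → a ≤ ‖w‖ → ‖w‖ ≤ b →
      M < ‖(fun v : ℂ => aeval v p)^[N] (Φ w)‖ := by
  set A := ({w : ℂ | |arg w| ≤ γ} ∩ {w | a ≤ ‖w‖}) ∩ closedBall 0 b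
  have hA : IsCompact A := (isCompact_closedBall 0 b).inter_left
    ((isClosed_setOf_abs_arg_le γ).inter (isClosed_le continuous_const continuous_norm))
  obtain ⟨N, hN⟩ := (hA.image hΦ).exists_mapsTo_iterate p.continuous_aeval
    (isOpen_lt continuous_const continuous_norm) (mapsTo_setOf_lt_norm hc hM) <| by
      rintro _ ⟨w, ⟨⟨hwγ, hwa⟩, -⟩, rfl⟩
      exact ((hbasin w (norm_pos_iff.1 (ha.trans_le hwa)) hwγ).eventually_gt_atTop M).exists
  exact ⟨N, fun w hwγ hwa hwb => hN ⟨w, ⟨⟨hwγ, hwa⟩, mem_closedBall_zero_iff.2 hwb⟩, rfl⟩⟩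

theorem exists_mul_rpow_le_norm_of_le_norm (hlam : 1 < lam)
    (hfe : ∀ z : ℂ, Φ (lam * z) = aeval (Φ z) p) (hΦ : Continuous Φ) (hp : p.coeff 0 = 0)
    (hdeg : 2 ≤ p.natDegree) {γ : ℝ} (hbasin : ∀ z : ℂ, z ≠ 0 → |arg z| ≤ γ → Φ z ∈ polyBasin p)
    {K : ℝ} (hK : 0 ≤ K) : ∃ ρ > 0, ∃ C > 0, ∀ z : ℂ, |arg z| ≤ γ → ρ ≤ ‖z‖ →
      C * ‖z‖ ^ K ≤ ‖Φ z‖ := by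
  set f := fun v : ℂ => aeval v p
  set c := lam ^ K
  have hc : 1 ≤ c := Real.one_le_rpow hlam.le hK
  obtain ⟨M, hM⟩ := exists_mul_norm_le_norm_aeval hp hdeg c
  have hM' (v : ℂ) (hv : max M 1 < ‖v‖) : c * ‖v‖ ≤ ‖f v‖ := hM v ((le_max_left _ _).trans_lt hv)
  obtain ⟨N, hN⟩ := exists_iterate_norm_gt_of_abs_arg_le hΦ hc hM' hbasin one_pos lam
  refine ⟨lam ^ N, by positivity, (c ^ (N + 1))⁻¹, by positivity, fun z hzγ hz => ?_⟩
  obtain ⟨k, hk, hk'⟩ := exists_nat_pow_near ((one_le_pow₀ hlam.le).trans hz) hlam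
  have hNk : N ≤ k := Nat.lt_succ_iff.1 ((pow_lt_pow_iff_right₀ hlam).1 (hz.trans_lt hk'))
  have hlamk : 0 < lam ^ k := by positivity
  set w : ℂ := ((lam ^ k)⁻¹ : ℝ) * z with hw_def
  have hw : ‖w‖ = ‖z‖ / lam ^ k := by
    rw [norm_mul, Complex.norm_real, Real.norm_of_nonneg (inv_nonneg.2 hlamk.le), inv_mul_eq_div]
  have hesc : max M 1 < ‖f^[N] (Φ w)‖ := hN w (by rwa [arg_real_mul z (inv_pos.2 hlamk)])
    (by rwa [hw, le_div_iff₀ hlamk, one_mul])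
    (by rw [hw, div_le_iff₀ hlamk, ← pow_succ']; exact hk'.le)
  have hlow : c ^ (k - N) ≤ ‖Φ z‖ := by
    have hz_eq : z = (lam : ℂ) ^ k * w := by
      rw [hw_def, ofReal_inv, ofReal_pow, ← mul_assoc,
        mul_inv_cancel₀ (by exact_mod_cast hlamk.ne'), one_mul]
    have hsplit : f^[k] (Φ w) = f^[k - N] (f^[N] (Φ w)) := by
      rw [← Function.iterate_add_apply, Nat.sub_add_cancel hNk]
    rw [hz_eq, apply_pow_mul_eq_iterate hfe, hsplit]
    calc c ^ (k - N) ≤ c ^ (k - N) * ‖f^[N] (Φ w)‖ :=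
          le_mul_of_one_le_right (by positivity) ((le_max_right _ _).trans hesc.le)
      _ ≤ _ := pow_mul_norm_le_norm_iterate hc hM' hesc (k - N)
  have hup : ‖z‖ ^ K ≤ c ^ (N + 1) * c ^ (k - N) := by
    calc ‖z‖ ^ K ≤ (lam ^ (k + 1)) ^ K := Real.rpow_le_rpow (norm_nonneg _) hk'.le hK
      _ = c ^ (k + 1) := (Real.rpow_pow_comm (by linarith) K (k + 1)).symm
      _ = c ^ (N + 1) * c ^ (k - N) := by rw [← pow_add]; congr 1; omega
  calc (c ^ (N + 1))⁻¹ * ‖z‖ ^ K ≤ (c ^ (N + 1))⁻¹ * (c ^ (N + 1) * c ^ (k - N)) := by gcongr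
    _ = c ^ (k - N) := by field_simp
    _ ≤ ‖Φ z‖ := hlow

end Poincare

theorem poincare_function_tendsto_infty_on_sector_general
    (p : Polynomial ℝ) (d : ℕ) (lam : ℝ)
    (hd : 2 ≤ d) (hdeg : p.natDegree = d)
    (hc0 : p.coeff 0 = 0) (hlam : 1 < lam)
    (Φ : ℂ → ℂ) (hΦ : Differentiable ℂ Φ)
    (hfe : ∀ z : ℂ, Φ (lam * z) = Polynomial.aeval (Φ z) p)
    (hΦ0 : Φ 0 = 0) (hΦ'0 : deriv Φ 0 = 1)
    (β : ℝ)
    (hW : ∀ z : ℂ, z ≠ 0 → |Complex.arg z| < β → z ∈ polyBasin p) :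
    ∀ ε : ℝ, 0 < ε → ε < β →
      ((∀ R : ℝ, ∃ r : ℝ, ∀ z : ℂ, z ≠ 0 → |Complex.arg z| ≤ β - ε →
          r ≤ ‖z‖ → R ≤ ‖Φ z‖) ∧
       (∀ K : ℝ, 1 < K → ∃ C > (0 : ℝ), ∀ z : ℂ, z ≠ 0 → |Complex.arg z| ≤ β - ε →
          C * ‖z‖ ^ K ≤ ‖Φ z‖)) := by
  intro ε hε _
  have hbasin (z : ℂ) (hz : z ≠ 0) (hzγ : |arg z| ≤ β - ε) : Φ z ∈ polyBasin p :=
    mem_polyBasin_of_abs_arg_le hlam hfe (hΦ 0) hΦ0 hΦ'0 (sub_lt_self β hε) hW hz hzγ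
  have hbound (K : ℝ) (hK : 1 < K) : ∃ C > (0 : ℝ), ∀ z : ℂ, z ≠ 0 → |arg z| ≤ β - ε →
      C * ‖z‖ ^ K ≤ ‖Φ z‖ := by
    obtain ⟨ρ, hρ, C₁, hC₁, hfar⟩ := exists_mul_rpow_le_norm_of_le_norm hlam hfe hΦ.continuous
      hc0 (hdeg ▸ hd) hbasin (by linarith : 0 ≤ K)
    obtain ⟨C₂, hC₂, hnear⟩ := exists_mul_rpow_le_norm_of_norm_le hΦ hΦ0 (by simp [hΦ'0])
      (fun z hz hzγ => ne_zero_of_mem_polyBasin hc0 (hbasin z hz hzγ)) hK.le hρ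
    refine ⟨min C₁ C₂, lt_min hC₁ hC₂, fun z _ hzγ => ?_⟩
    rcases le_total ρ ‖z‖ with hz | hz
    · exact (mul_le_mul_of_nonneg_right (min_le_left _ _) (by positivity)).trans (hfar z hzγ hz)
    · exact (mul_le_mul_of_nonneg_right (min_le_right _ _) (by positivity)).trans (hnear z hzγ hz)
  refine ⟨fun R => ?_, hbound⟩
  obtain ⟨C, hC, hCz⟩ := hbound 2 one_lt_two
  obtain ⟨r, hr⟩ := eventually_atTop.1
    (((tendsto_rpow_atTop two_pos).const_mul_atTop hC).eventually_ge_atTop R)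
  exact ⟨r, fun z hz hzγ hrz => (hr ‖z‖ hrz).trans (hCz z hz hzγ)⟩

/-- If the basin of attraction of `∞` of `p` contains the angular region
`W_β`, then `|Φ(z)| → ∞` uniformly on every sector `|arg z| ≤ β − ε`, and for every `K > 1`
there is `C > 0` with `|Φ(z)| ≥ C·|z|^K` on that sector. -/
theorem poincare_function_tendsto_infty_on_sector
    (p : Polynomial ℝ) (d : ℕ) (lam : ℝ)
    (hd : 2 ≤ d) (hdeg : p.natDegree = d)
    (hc0 : p.coeff 0 = 0) (hc1 : p.coeff 1 = lam) (hlam : 1 < lam)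
    (Φ : ℂ → ℂ) (hΦ : Differentiable ℂ Φ)
    (hfe : ∀ z : ℂ, Φ (lam * z) = Polynomial.aeval (Φ z) p)
    (hΦ0 : Φ 0 = 0) (hΦ'0 : deriv Φ 0 = 1)
    (β : ℝ) (hβ : 0 < β)
    (hW : ∀ z : ℂ, z ≠ 0 → |Complex.arg z| < β → z ∈ polyBasin p) :
    ∀ ε : ℝ, 0 < ε → ε < β →
      ((∀ R : ℝ, ∃ r : ℝ, ∀ z : ℂ, z ≠ 0 → |Complex.arg z| ≤ β - ε →
          r ≤ ‖z‖ → R ≤ ‖Φ z‖) ∧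
       (∀ K : ℝ, 1 < K → ∃ C > (0 : ℝ), ∀ z : ℂ, z ≠ 0 → |Complex.arg z| ≤ β - ε →
          C * ‖z‖ ^ K ≤ ‖Φ z‖)) :=
  poincare_function_tendsto_infty_on_sector_general p d lam hd hdeg hc0 hlam Φ hΦ hfe hΦ0 hΦ'0 β hW
end

section
/- If the basin of attraction F_∞ of ∞ of p contains the angular region W_β for some β > 0, then Φ has no zeros in W_β, i.e. Φ(z) ≠ 0 for every z ∈ ℂ \ {0} with |arg z| < β. -/
/-!
If `Φ z = 0` with `z` in the sector, then since `Φ w ≈ w` near `0`, the point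
`u = Φ (λ⁻ⁿ z)` also lies in the sector for large `n`. The functional equation gives
`pⁿ(u) = Φ z = 0`, and `0` is fixed by `p`, so the orbit of `u` stays bounded,
contradicting `u ∈ F_∞`.
-/

open Filter Topology

def sector (β : ℝ) : Set ℂ := {z | z ≠ 0 ∧ |Complex.arg z| < β}

lemma Complex.abs_arg_eq_arccos {u : ℂ} (hu : u ≠ 0) :
    |Complex.arg u| = Real.arccos (u.re / ‖u‖) := by
  rw [← Complex.cos_arg hu, ← Real.cos_abs,
    Real.arccos_cos (abs_nonneg _) (Complex.abs_arg_le_pi u)]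

lemma isOpen_sector (β : ℝ) : IsOpen (sector β) := by
  have hcont : ContinuousOn (fun u : ℂ => Real.arccos (u.re / ‖u‖)) {0}ᶜ :=
    Real.continuous_arccos.comp_continuousOn <|
      Complex.continuous_re.continuousOn.div continuous_norm.continuousOn
        fun u hu => norm_ne_zero_iff.mpr hu
  convert hcont.isOpen_inter_preimage isOpen_compl_singleton isOpen_Iio using 1
  ext u
  simp only [sector, Set.mem_ofPred_eq, Set.mem_inter_iff, Set.mem_compl_singleton_iff,
    Set.mem_preimage, Set.mem_Iio]
  exact and_congr_right fun hu => by rw [Complex.abs_arg_eq_arccos hu]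

lemma ofReal_mul_mem_sector {β t : ℝ} (ht : 0 < t) {u : ℂ} (hu : u ∈ sector β) :
    (t : ℂ) * u ∈ sector β :=
  ⟨mul_ne_zero (Complex.ofReal_ne_zero.mpr ht.ne') hu.1, by
    rw [Complex.arg_real_mul u ht]; exact hu.2⟩

lemma tendsto_inv_mul_apply_ofReal_mul {Φ : ℂ → ℂ} {Φ' : ℂ} (hΦ : HasDerivAt Φ Φ' 0)
    (hΦ0 : Φ 0 = 0) (z : ℂ) :
    Tendsto (fun t : ℝ => (t : ℂ)⁻¹ * Φ (t * z)) (𝓝[≠] 0) (𝓝 (Φ' * z)) := by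
  have hray : HasDerivAt (fun t : ℝ => Φ (t * z)) (Φ' * z) 0 := by
    have hlin : HasDerivAt (fun w : ℂ => w * z) z 0 := by
      simpa using (hasDerivAt_id (0 : ℂ)).mul_const z
    have h := (hΦ.comp_of_eq (0 : ℂ) hlin (zero_mul z).symm).comp_ofReal (z := 0)
    simpa using h
  simpa [slope_fun_def, hΦ0, Complex.real_smul] using hasDerivAt_iff_tendsto_slope.mp hray

lemma eventually_apply_ofReal_mul_mem_sector {Φ : ℂ → ℂ} (hΦ : HasDerivAt Φ 1 0)
    (hΦ0 : Φ 0 = 0) {β : ℝ} {z : ℂ} (hz : z ∈ sector β) :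
    ∀ᶠ t : ℝ in 𝓝[>] 0, Φ (t * z) ∈ sector β := by
  have hlim : Tendsto (fun t : ℝ => (t : ℂ)⁻¹ * Φ (t * z)) (𝓝[>] 0) (𝓝 z) := by
    simpa using (tendsto_inv_mul_apply_ofReal_mul hΦ hΦ0 z).mono_left
      (nhdsWithin_mono _ fun t (ht : t ∈ Set.Ioi 0) => ne_of_gt ht)
  filter_upwards [hlim.eventually ((isOpen_sector β).mem_nhds hz), self_mem_nhdsWithin]
    with t ht htpos
  have ht0 : (t : ℂ) ≠ 0 := Complex.ofReal_ne_zero.mpr (ne_of_gt htpos)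
  simpa [← mul_assoc, mul_inv_cancel₀ ht0] using ofReal_mul_mem_sector htpos ht

lemma not_tendsto_norm_iterate_of_iterate_eq_fixedPt {E : Type*} [NormedAddCommGroup E]
    {f : E → E} {x u : E} (hx : Function.IsFixedPt f x) {n : ℕ} (hu : f^[n] u = x) :
    ¬Tendsto (fun m => ‖f^[m] u‖) atTop atTop := by
  refine not_tendsto_atTop_of_tendsto_nhds (a := ‖x‖) (tendsto_atTop_of_eventually_const
    (i₀ := n) fun m hm => ?_)
  rw [← Nat.sub_add_cancel hm, Function.iterate_add_apply, hu, (hx.iterate _).eq]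

theorem poincare_function_no_zeros_in_sector_general
    (p : Polynomial ℝ) (lam : ℝ)
    (hc0 : p.coeff 0 = 0) (hlam : 1 < lam)
    (Φ : ℂ → ℂ)
    (hfe : ∀ z : ℂ, Φ (lam * z) = Polynomial.aeval (Φ z) p)
    (hΦ0 : Φ 0 = 0) (hΦ'0 : deriv Φ 0 = 1)
    (β : ℝ)
    (hW : ∀ z : ℂ, z ≠ 0 → |Complex.arg z| < β → z ∈ polyBasin p) :
    ∀ z : ℂ, z ≠ 0 → |Complex.arg z| < β → Φ z ≠ 0 := by
  intro z hz hargz hzero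
  set f : ℂ → ℂ := fun w => Polynomial.aeval w p
  have hfix : Function.IsFixedPt f 0 := by
    simp [f, Function.IsFixedPt, Polynomial.aeval_def, Polynomial.eval₂_at_zero, hc0]
  have hderiv : HasDerivAt Φ 1 0 := by
    rw [← hΦ'0]
    exact (differentiableAt_of_deriv_ne_zero (hΦ'0 ▸ one_ne_zero)).hasDerivAt
  have hsemiconj : Function.Semiconj Φ (fun w => (lam : ℂ) * w) f := hfe
  have hlam0 : 0 < lam := one_pos.trans hlam
  have hscale : Tendsto (fun n : ℕ => lam⁻¹ ^ n) atTop (𝓝[>] 0) :=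
    tendsto_pow_atTop_nhdsWithin_zero_of_lt_one (inv_pos.mpr hlam0) (inv_lt_one_of_one_lt₀ hlam)
  obtain ⟨n, hn⟩ :=
    (hscale.eventually (eventually_apply_ofReal_mul_mem_sector hderiv hΦ0 ⟨hz, hargz⟩)).exists
  have horbit : f^[n] (Φ ((lam⁻¹ ^ n : ℝ) * z)) = 0 := by
    rw [← (hsemiconj.iterate_right n).eq, mul_left_iterate]
    dsimp only
    rw [← mul_assoc, Complex.ofReal_pow,
      ← mul_pow, Complex.ofReal_inv, mul_inv_cancel₀ (by exact_mod_cast hlam0.ne'), one_pow,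
      one_mul, hzero]
  exact not_tendsto_norm_iterate_of_iterate_eq_fixedPt hfix horbit (hW _ hn.1 hn.2)

/-- If the basin of attraction of `∞` of `p` contains the angular region
`W_β` for some `β > 0`, then `Φ` has no zeros in `W_β`. -/
theorem poincare_function_no_zeros_in_sector
    (p : Polynomial ℝ) (d : ℕ) (lam : ℝ)
    (hd : 2 ≤ d) (hdeg : p.natDegree = d)
    (hc0 : p.coeff 0 = 0) (hc1 : p.coeff 1 = lam) (hlam : 1 < lam)
    (Φ : ℂ → ℂ) (hΦ : Differentiable ℂ Φ)
    (hfe : ∀ z : ℂ, Φ (lam * z) = Polynomial.aeval (Φ z) p)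
    (hΦ0 : Φ 0 = 0) (hΦ'0 : deriv Φ 0 = 1)
    (β : ℝ) (hβ : 0 < β)
    (hW : ∀ z : ℂ, z ≠ 0 → |Complex.arg z| < β → z ∈ polyBasin p) :
    ∀ z : ℂ, z ≠ 0 → |Complex.arg z| < β → Φ z ≠ 0 :=
  poincare_function_no_zeros_in_sector_general p lam hc0 hlam Φ hfe hΦ0 hΦ'0 β hW
end

section
/- Suppose a_d > 0 and the basin of attraction F_∞ of ∞ of p contains W_β for some β > 0, and let F be the 1-periodic holomorphic function of Theorem 1. Then for every z ∈ ℂ \ {0} with Φ(z) ∈ F_∞, the limit lim_{n→∞} Log(Φ(λⁿ z)) / (dⁿ · z^ρ) exists (Log denoting the principal logarithm, defined for all large n since Φ(λⁿz) → ∞, and z^ρ = exp(ρ·Log z)); moreover, for every z ∈ W_β with Φ(z) ∈ F_∞ this limit equals F(log z / log λ). In particular, the limit furnishes the analytic continuation of z ↦ F(log z / log λ) to Φ^{(−1)}(F_∞). -/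
/-!
Along the ray `λⁿ z` the functional equation gives `Φ(λⁿ z) = pⁿ(Φ z)`. Near `∞`,
`log p(w) - d log w` is bounded, so for `Φ z` in the basin the increments of `log pⁿ(Φ z) / dⁿ`
are `O(d⁻ⁿ)` and the sequence converges. In the sector, `log(λⁿ z) / log λ = log z / log λ + n`
and `(λⁿ z)^ρ = dⁿ z^ρ`, so the expansion of Theorem 1 and the periodicity of `F` identify the
limit as `F(log z / log λ)`.
-/

open Filter Topology

open Bornology Complex Polynomial Asymptotics

lemma norm_log_sub_natCast_mul_log_le {u v : ℂ} (hu : u ≠ 0) (hv : v ≠ 0) (n : ℕ) :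
    ‖log u - n * log v‖ ≤ |Real.log ‖u / v ^ n‖| + (n + 1) * Real.pi := by
  have hre : (log u - n * log v).re = Real.log ‖u / v ^ n‖ := by
    rw [norm_div, norm_pow, Real.log_div (norm_ne_zero_iff.mpr hu)
      (pow_ne_zero _ (norm_ne_zero_iff.mpr hv)), Real.log_pow]
    simp [log_re]
  have him : |(log u - n * log v).im| ≤ (n + 1) * Real.pi := by
    have harg : |n * arg v| ≤ n * Real.pi := by
      rw [abs_mul, Nat.abs_cast]; gcongr; exact abs_arg_le_pi v
    simp only [sub_im, log_im, mul_im, natCast_re, natCast_im, zero_mul, add_zero]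
    linarith [abs_sub (arg u) (n * arg v), abs_arg_le_pi u]
  calc ‖log u - n * log v‖ ≤ |(log u - n * log v).re| + |(log u - n * log v).im| :=
        norm_le_abs_re_add_abs_im _
    _ ≤ _ := by rw [hre]; gcongr

lemma exists_norm_log_eval_sub_natDegree_mul_log_le (P : ℂ[X]) :
    ∃ C, ∀ᶠ w in cobounded ℂ, ‖log (P.eval w) - P.natDegree * log w‖ ≤ C := by
  rcases eq_or_ne P 0 with rfl | hP
  · exact ⟨0, by simp⟩
  have hlc : P.leadingCoeff ≠ 0 := leadingCoeff_ne_zero.mpr hP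
  have hw : ∀ᶠ w in cobounded ℂ, w ≠ 0 :=
    (eventually_cobounded_le_norm 1).mono fun w hw => norm_pos_iff.mp (one_pos.trans_le hw)
  have hratio : Tendsto (fun w => P.eval w / w ^ P.natDegree) (cobounded ℂ)
      (𝓝 P.leadingCoeff) :=
    (isEquivalent_cobounded_leading_monomial.div IsEquivalent.refl).symm.tendsto_nhds
      (tendsto_const_nhds.congr' (hw.mono fun w hw => by simp [hw]))
  have hlog : Tendsto (fun w => Real.log ‖P.eval w / w ^ P.natDegree‖) (cobounded ℂ)
      (𝓝 (Real.log ‖P.leadingCoeff‖)) :=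
    (Real.continuousAt_log (norm_ne_zero_iff.mpr hlc)).tendsto.comp hratio.norm
  refine ⟨|Real.log ‖P.leadingCoeff‖| + 1 + (P.natDegree + 1) * Real.pi, ?_⟩
  filter_upwards [hw, hratio.eventually_ne hlc, Metric.tendsto_nhds.mp hlog 1 one_pos]
    with w hw hPw hclose
  refine (norm_log_sub_natCast_mul_log_le (div_ne_zero_iff.mp hPw).1 hw _).trans ?_
  rw [Real.dist_eq] at hclose
  gcongr
  linarith [abs_sub_abs_le_abs_sub (Real.log ‖P.eval w / w ^ P.natDegree‖)
    (Real.log ‖P.leadingCoeff‖)]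

lemma exists_tendsto_div_pow_of_norm_sub_mul_le {𝕜 : Type*} [NormedField 𝕜] [CompleteSpace 𝕜]
    {x : ℕ → 𝕜} {d : 𝕜} (hd : 1 < ‖d‖) {C : ℝ}
    (hx : ∀ᶠ n in atTop, ‖x (n + 1) - d * x n‖ ≤ C) :
    ∃ L, Tendsto (fun n => x n / d ^ n) atTop (𝓝 L) := by
  set u : ℕ → 𝕜 := fun n => x n / d ^ n
  have hd0 : d ≠ 0 := norm_pos_iff.mp (one_pos.trans hd)
  have hgeom : Summable (fun n : ℕ => C * ‖d‖⁻¹ * ‖d‖⁻¹ ^ n) :=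
    (summable_geometric_of_lt_one (by positivity) (inv_lt_one_of_one_lt₀ hd)).mul_left _
  have hsum : Summable (fun n => u (n + 1) - u n) := by
    refine hgeom.of_norm_bounded_eventually_nat (hx.mono fun n hn => ?_)
    have hdiff : u (n + 1) - u n = (x (n + 1) - d * x n) / d ^ (n + 1) := by
      simp only [u]; field_simp; ring
    rw [hdiff, norm_div, norm_pow, mul_assoc, ← pow_succ', inv_pow, ← div_eq_mul_inv]
    gcongr
  refine ⟨u 0 + ∑' n, (u (n + 1) - u n), ?_⟩
  refine (hsum.hasSum.tendsto_sum_nat.const_add (u 0)).congr fun n => ?_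
  rw [Finset.sum_range_sub]; ring

lemma exists_tendsto_log_iterate_div_pow {g : ℂ → ℂ} {d : ℂ} (hd : 1 < ‖d‖) {C : ℝ}
    (hg : ∀ᶠ w in cobounded ℂ, ‖log (g w) - d * log w‖ ≤ C) {w₀ : ℂ}
    (hw₀ : Tendsto (fun n => g^[n] w₀) atTop (cobounded ℂ)) :
    ∃ L, Tendsto (fun n => log (g^[n] w₀) / d ^ n) atTop (𝓝 L) :=
  exists_tendsto_div_pow_of_norm_sub_mul_le hd <| (hw₀.eventually hg).mono fun n hn => by
    rwa [Function.iterate_succ_apply']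

lemma tendsto_div_of_norm_sub_mul_le {α 𝕜 : Type*} [NormedField 𝕜] {l : Filter α}
    {a D : α → 𝕜} {L : 𝕜} {C : ℝ} (hD : Tendsto (fun x => ‖D x‖) l atTop)
    (h : ∀ᶠ x in l, ‖a x - D x * L‖ ≤ C) : Tendsto (fun x => a x / D x) l (𝓝 L) := by
  rw [← tendsto_sub_nhds_zero_iff]
  refine squeeze_zero_norm' ?_ ((tendsto_const_nhds (x := C)).div_atTop hD)
  filter_upwards [h, hD.eventually_gt_atTop 0] with x hx hDx
  have hD0 : D x ≠ 0 := norm_pos_iff.mp hDx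
  rw [show a x / D x - L = (a x - D x * L) / D x by field_simp, norm_div]
  gcongr

lemma apply_pow_mul_eq_iterate_s4 {M α : Type*} [Monoid M] {Φ : M → α} {g : α → α} {c : M}
    (h : ∀ z, Φ (c * z) = g (Φ z)) (n : ℕ) (z : M) : Φ (c ^ n * z) = g^[n] (Φ z) := by
  have hsemiconj : Function.Semiconj Φ (c * ·) g := h
  simpa only [mul_left_iterate] using hsemiconj.iterate_right n z

section Ray

variable {r : ℝ} {z : ℂ}

lemma log_ofReal_pow_mul (hr : 0 < r) (hz : z ≠ 0) (n : ℕ) :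
    log ((r : ℂ) ^ n * z) = n * Real.log r + log z := by
  rw [← ofReal_pow, log_ofReal_mul (pow_pos hr n) hz, Real.log_pow]
  push_cast; ring

lemma arg_ofReal_pow_mul (hr : 0 < r) (n : ℕ) : arg ((r : ℂ) ^ n * z) = arg z := by
  rw [← ofReal_pow, arg_real_mul z (pow_pos hr n)]

lemma ofReal_mul_cpow (hr : 0 < r) (hz : z ≠ 0) (s : ℂ) :
    ((r : ℂ) * z) ^ s = (r : ℂ) ^ s * z ^ s := by
  have hr' : (r : ℂ) ≠ 0 := ofReal_ne_zero.mpr hr.ne'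
  rw [cpow_def_of_ne_zero (mul_ne_zero hr' hz), log_ofReal_mul hr hz, ofReal_log hr.le,
    add_mul, exp_add, ← cpow_def_of_ne_zero hr', ← cpow_def_of_ne_zero hz]

lemma ofReal_pow_mul_cpow (hr : 0 < r) (hz : z ≠ 0) (n : ℕ) (s : ℝ) :
    ((r : ℂ) ^ n * z) ^ (s : ℂ) = ((r ^ s : ℝ) : ℂ) ^ n * z ^ (s : ℂ) := by
  rw [← ofReal_pow, ofReal_mul_cpow (pow_pos hr n) hz, ← ofReal_cpow (pow_pos hr n).le,
    ← Real.rpow_natCast, ← Real.rpow_mul hr.le, mul_comm (n : ℝ), Real.rpow_mul hr.le,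
    Real.rpow_natCast, ofReal_pow]

lemma tendsto_norm_ofReal_pow_mul (hr : 1 < r) (hz : z ≠ 0) :
    Tendsto (fun n : ℕ => ‖(r : ℂ) ^ n * z‖) atTop atTop := by
  simpa [norm_mul, abs_of_pos (one_pos.trans hr)] using
    (tendsto_pow_atTop_atTop_of_one_lt hr).atTop_mul_const (norm_pos_iff.mpr hz)

lemma eventually_norm_le_of_sector_bound (hr : 1 < r) (hz : z ≠ 0) {E : ℂ → ℂ} {β R δ M : ℝ}
    (hzβ : |arg z| ≤ β) (hδ : 0 ≤ δ) (hM : 0 ≤ M)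
    (hE : ∀ w : ℂ, w ≠ 0 → |arg w| ≤ β → R ≤ ‖w‖ → ‖E w‖ ≤ δ * ‖w‖ ^ (-M)) :
    ∀ᶠ n : ℕ in atTop, ‖E ((r : ℂ) ^ n * z)‖ ≤ δ := by
  have hr0 : 0 < r := one_pos.trans hr
  filter_upwards [(tendsto_norm_ofReal_pow_mul hr hz).eventually_ge_atTop (max R 1)] with n hn
  refine (hE _ (mul_ne_zero (pow_ne_zero n (ofReal_ne_zero.mpr hr0.ne')) hz)
    (by rwa [arg_ofReal_pow_mul hr0]) (le_of_max_le_left hn)).trans ?_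
  exact mul_le_of_le_one_right hδ
    (Real.rpow_le_one_of_one_le_of_nonpos (le_of_max_le_right hn) (neg_nonpos.mpr hM))

end Ray

lemma apply_add_natCast_eq_of_periodic_on_strip {F : ℂ → ℂ} {b : ℝ}
    (hF : ∀ w : ℂ, |w.im| < b → F (w + 1) = F w) {w : ℂ} (hw : |w.im| < b) (n : ℕ) :
    F (w + n) = F w := by
  induction n with
  | zero => simp
  | succ n ih => rw [Nat.cast_succ, ← add_assoc, hF _ (by simpa using hw), ih]

lemma tendsto_div_pow_mul_cpow_of_norm_sub_le {G F : ℂ → ℂ} {lam D C : ℝ} {c z : ℂ}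
    (hlam : 1 < lam) (hD : 1 < D) (hz : z ≠ 0)
    (hF : ∀ n : ℕ, F (log z / Real.log lam + n) = F (log z / Real.log lam))
    (hG : ∀ᶠ n : ℕ in atTop, ‖G ((lam : ℂ) ^ n * z)
        - (((lam : ℂ) ^ n * z) ^ ((Real.log D / Real.log lam : ℝ) : ℂ)
          * F (log ((lam : ℂ) ^ n * z) / Real.log lam) - c)‖ ≤ C) :
    Tendsto (fun n : ℕ => G ((lam : ℂ) ^ n * z)
        / ((D : ℂ) ^ n * z ^ ((Real.log D / Real.log lam : ℝ) : ℂ)))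
      atTop (𝓝 (F (log z / Real.log lam))) := by
  have hlam0 : 0 < lam := one_pos.trans hlam
  have hlog : (Real.log lam : ℂ) ≠ 0 := ofReal_ne_zero.mpr (Real.log_pos hlam).ne'
  have hzs : z ^ ((Real.log D / Real.log lam : ℝ) : ℂ) ≠ 0 := by
    rw [cpow_def_of_ne_zero hz]; exact exp_ne_zero _
  have hpow : lam ^ (Real.log D / Real.log lam) = D := by
    rw [Real.log_div_log, Real.rpow_logb hlam0 hlam.ne' (one_pos.trans hD)]
  have hshift : ∀ n : ℕ, log ((lam : ℂ) ^ n * z) / Real.log lam = log z / Real.log lam + n := by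
    intro n
    rw [log_ofReal_pow_mul hlam0 hz]
    field_simp
    ring
  refine tendsto_div_of_norm_sub_mul_le (C := C + ‖c‖) ?_ (hG.mono fun n hn => ?_)
  · simpa [norm_mul, abs_of_pos (one_pos.trans hD)] using
      (tendsto_pow_atTop_atTop_of_one_lt hD).atTop_mul_const (norm_pos_iff.mpr hzs)
  · rw [ofReal_pow_mul_cpow hlam0 hz, hpow, hshift, hF] at hn
    calc _ = ‖(G ((lam : ℂ) ^ n * z) - ((D : ℂ) ^ n * z ^ ((Real.log D / Real.log lam : ℝ) : ℂ)
          * F (log z / Real.log lam) - c)) - c‖ := by ring_nf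
      _ ≤ C + ‖c‖ := (norm_sub_le _ _).trans (by gcongr)

theorem poincare_limit_analytic_continuation_general
    (p : Polynomial ℝ) (d : ℕ) (lam : ℝ)
    (hd : 2 ≤ d) (hdeg : p.natDegree = d)
    (hlam : 1 < lam)
    (Φ : ℂ → ℂ)
    (hfe : ∀ z : ℂ, Φ (lam * z) = Polynomial.aeval (Φ z) p)
    (β : ℝ)
    -- `F` is the 1-periodic holomorphic function of Theorem 1:
    (F : ℂ → ℂ)
    (hFper : ∀ w : ℂ, |w.im| < β / Real.log lam → F (w + 1) = F w)
    (hFasymp : ∀ ε : ℝ, 0 < ε → ε < β → ∀ M : ℝ, 0 < M → ∀ δ : ℝ, 0 < δ → ∃ R : ℝ,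
      ∀ z : ℂ, z ≠ 0 → |Complex.arg z| ≤ β - ε → R ≤ ‖z‖ →
        ‖Complex.log (Φ z)
            - (z ^ ((Real.log d / Real.log lam : ℝ) : ℂ)
                  * F (Complex.log z / (Real.log lam : ℂ))
                - (Real.log p.leadingCoeff : ℂ) / ((d : ℂ) - 1))‖
          ≤ δ * ‖z‖ ^ (-M)) :
    ∀ z : ℂ, z ≠ 0 → Φ z ∈ polyBasin p →
      ∃ L : ℂ,
        Tendsto (fun n : ℕ =>
            Complex.log (Φ ((lam : ℂ) ^ n * z))
              / ((d : ℂ) ^ n * z ^ ((Real.log d / Real.log lam : ℝ) : ℂ)))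
          atTop (nhds L) ∧
        (|Complex.arg z| < β → L = F (Complex.log z / (Real.log lam : ℂ))) := by
  intro z hz hbasin
  have hd1 : (1 : ℝ) < d := by exact_mod_cast hd
  obtain ⟨C, hC⟩ := exists_norm_log_eval_sub_natDegree_mul_log_le (p.map (algebraMap ℝ ℂ))
  simp only [eval_map_algebraMap, natDegree_map, hdeg] at hC
  obtain ⟨L, hL⟩ := exists_tendsto_log_iterate_div_pow (d := d) (by simpa using hd1) hC
    (tendsto_norm_atTop_iff_cobounded.mp hbasin)
  have hlim := hL.div_const (z ^ ((Real.log d / Real.log lam : ℝ) : ℂ))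
  simp only [← apply_pow_mul_eq_iterate_s4 (g := fun w => aeval w p) hfe, div_div] at hlim
  refine ⟨_, hlim, fun harg => tendsto_nhds_unique hlim ?_⟩
  obtain ⟨R, hR⟩ := hFasymp ((β - |arg z|) / 2) (by linarith)
    (by linarith [abs_nonneg (arg z)]) 1 one_pos 1 one_pos
  have hstrip : |(log z / Real.log lam).im| < β / Real.log lam := by
    rw [div_ofReal_im, log_im, abs_div, abs_of_pos (Real.log_pos hlam)]
    exact div_lt_div_of_pos_right harg (Real.log_pos hlam)
  simpa only [ofReal_natCast] using
    tendsto_div_pow_mul_cpow_of_norm_sub_le (G := fun w => log (Φ w)) hlam hd1 hz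
      (apply_add_natCast_eq_of_periodic_on_strip hFper hstrip)
      (eventually_norm_le_of_sector_bound hlam hz (by linarith) zero_le_one zero_le_one hR)

/-- Corollary 1 of the paper. For every `z ≠ 0` with `Φ(z)` in the basin of
attraction of `∞`, the limit `lim_{n→∞} Log Φ(λⁿz)/(dⁿ z^ρ)` exists; for `z ∈ W_β` with
`Φ(z) ∈ F_∞` it equals `F(log z/log λ)`.  Thus the limit furnishes the analytic continuation
of `z ↦ F(log z / log λ)` to `Φ⁻¹(F_∞)`. -/
theorem poincare_limit_analytic_continuation
    (p : Polynomial ℝ) (d : ℕ) (lam : ℝ)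
    (hd : 2 ≤ d) (hdeg : p.natDegree = d)
    (hc0 : p.coeff 0 = 0) (hc1 : p.coeff 1 = lam) (hlam : 1 < lam)
    (had : 0 < p.leadingCoeff)
    (Φ : ℂ → ℂ) (hΦ : Differentiable ℂ Φ)
    (hfe : ∀ z : ℂ, Φ (lam * z) = Polynomial.aeval (Φ z) p)
    (hΦ0 : Φ 0 = 0) (hΦ'0 : deriv Φ 0 = 1)
    (β : ℝ) (hβ : 0 < β)
    (hW : ∀ z : ℂ, z ≠ 0 → |Complex.arg z| < β → z ∈ polyBasin p)
    -- `F` is the 1-periodic holomorphic function of Theorem 1: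
    (F : ℂ → ℂ)
    (hF : DifferentiableOn ℂ F {w : ℂ | |w.im| < β / Real.log lam})
    (hFper : ∀ w : ℂ, |w.im| < β / Real.log lam → F (w + 1) = F w)
    (hFasymp : ∀ ε : ℝ, 0 < ε → ε < β → ∀ M : ℝ, 0 < M → ∀ δ : ℝ, 0 < δ → ∃ R : ℝ,
      ∀ z : ℂ, z ≠ 0 → |Complex.arg z| ≤ β - ε → R ≤ ‖z‖ →
        ‖Complex.log (Φ z)
            - (z ^ ((Real.log d / Real.log lam : ℝ) : ℂ)
                  * F (Complex.log z / (Real.log lam : ℂ))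
                - (Real.log p.leadingCoeff : ℂ) / ((d : ℂ) - 1))‖
          ≤ δ * ‖z‖ ^ (-M)) :
    ∀ z : ℂ, z ≠ 0 → Φ z ∈ polyBasin p →
      ∃ L : ℂ,
        Tendsto (fun n : ℕ =>
            Complex.log (Φ ((lam : ℂ) ^ n * z))
              / ((d : ℂ) ^ n * z ^ ((Real.log d / Real.log lam : ℝ) : ℂ)))
          atTop (nhds L) ∧
        (|Complex.arg z| < β → L = F (Complex.log z / (Real.log lam : ℂ))) :=
  poincare_limit_analytic_continuation_general p d lam hd hdeg hlam Φ hfe β F hFper hFasymp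
end

section
/- Let w, z ∈ ℂ. (i) If (z_n)_{n≥0} is a sequence of complex numbers with z_0 = w and p(z_{n+1}) = z_n for all n ≥ 0, and if the sequence (λⁿ·z_n) converges to z, then Φ(z) = w. (ii) Conversely, if Φ(z) = w, then the sequence z_n := Φ(λ^{−n}·z) satisfies z_0 = w, p(z_{n+1}) = z_n for all n ≥ 0, and λⁿ·z_n → z as n → ∞. Hence the solutions of Φ(z) = w are exactly the limits of the rescaled backward orbits (λⁿ·z_n) of w under p. -/
/-!
Since `Φ(0) = 0` and `Φ'(0) = 1`, `Φ` has a local inverse `ψ` at `0`, and the functional equation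
turns into `ψ(p(v)) = λ ψ(v)` near `0`. If `λⁿ zₙ → z` then `zₙ → 0`, so `λⁿ ψ(zₙ)` is eventually
constant; as `ψ(v) ~ v` at `0` it also tends to `z`, hence `λⁿ ψ(zₙ) = z` for large `n` and
`Φ(z) = pⁿ(Φ(ψ(zₙ))) = pⁿ(zₙ) = z₀`. Conversely `λⁿ Φ(λ⁻ⁿ z) → z` because `Φ(u) ~ u` at `0`.
-/

open Filter Topology Asymptotics Function

theorem Filter.EventuallyConst.eventually_eq_of_tendsto {α β : Type*} [TopologicalSpace β]
    [T2Space β] {l : Filter α} [l.NeBot] {f : α → β} {b : β} (h : EventuallyConst f l)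
    (hf : Tendsto f l (𝓝 b)) : ∀ᶠ x in l, f x = b := by
  have : Nonempty β := ⟨b⟩
  obtain ⟨c, hc⟩ := eventuallyConst_iff_exists_eventuallyEq.1 h
  rwa [tendsto_nhds_unique hf (tendsto_const_nhds.congr' hc.symm)]

theorem Function.iterate_apply_eq_of_apply_succ_eq {α : Type*} {g : α → α} {x : ℕ → α}
    (hx : ∀ n, g (x (n + 1)) = x n) (n : ℕ) : g^[n] (x n) = x 0 := by
  induction n with
  | zero => rfl
  | succ n ih => rw [iterate_succ_apply, hx, ih]

section

variable {𝕜 : Type*} [NontriviallyNormedField 𝕜]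

theorem tendsto_inv_pow_atTop_nhds_zero_of_one_lt_norm {a : 𝕜} (ha : 1 < ‖a‖) :
    Tendsto (fun n : ℕ => (a ^ n)⁻¹) atTop (𝓝 0) := by
  simp_rw [← inv_pow]
  refine tendsto_pow_atTop_nhds_zero_of_norm_lt_one ?_
  rwa [norm_inv, inv_lt_one_iff₀, or_iff_right (by linarith)]

theorem HasDerivAt.tendsto_smul_comp_of_tendsto_mul {E ι : Type*} [NormedAddCommGroup E]
    [NormedSpace 𝕜 E] {l : Filter ι} {f : 𝕜 → E} {f' : E} {c x : ι → 𝕜} {z : 𝕜}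
    (hf : HasDerivAt f f' 0) (hf0 : f 0 = 0) (hx : Tendsto x l (𝓝 0))
    (hcx : Tendsto (fun i => c i * x i) l (𝓝 z)) :
    Tendsto (fun i => c i • f (x i)) l (𝓝 (z • f')) := by
  have hrem : (fun i => f (x i) - x i • f') =o[l] x := by
    simpa [hf0, comp_def] using hf.isLittleO.comp_tendsto hx
  have hsmall : (fun i => c i • (f (x i) - x i • f')) =o[l] (fun _ => (1 : 𝕜)) :=
    ((isBigO_refl c l).smul_isLittleO hrem).trans_isBigO (hcx.isBigO_one 𝕜)
  simpa [smul_sub, smul_smul] using (hcx.smul_const f').add ((isLittleO_one_iff 𝕜).1 hsmall)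

theorem HasDerivAt.tendsto_pow_mul_comp_inv_pow_mul {f : 𝕜 → 𝕜} {a : 𝕜}
    (hf : HasDerivAt f 1 0) (hf0 : f 0 = 0) (ha : 1 < ‖a‖) (z : 𝕜) :
    Tendsto (fun n : ℕ => a ^ n * f ((a ^ n)⁻¹ * z)) atTop (𝓝 z) := by
  have ha0 : a ≠ 0 := norm_pos_iff.1 (by linarith)
  have hx := (tendsto_inv_pow_atTop_nhds_zero_of_one_lt_norm ha).mul_const z
  rw [zero_mul] at hx
  simpa using hf.tendsto_smul_comp_of_tendsto_mul hf0 hx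
    (tendsto_const_nhds.congr fun n => by field_simp)

variable [CompleteSpace 𝕜]

theorem HasStrictDerivAt.eventually_localInverse_apply_eq_mul {f P : 𝕜 → 𝕜} {f' a : 𝕜}
    (hf : HasStrictDerivAt f f' 0) (hf' : f' ≠ 0) (hf0 : f 0 = 0)
    (hsemi : Semiconj f (a * ·) P) :
    ∀ᶠ v in 𝓝 0, hf.localInverse f f' 0 hf' (P v) = a * hf.localInverse f f' 0 hf' v := by
  set ψ := hf.localInverse f f' 0 hf'
  have hψ : ContinuousAt ψ 0 := by
    simpa [hf0] using (hf.to_localInverse hf').hasDerivAt.continuousAt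
  have hψ0 : ψ 0 = 0 := by
    simpa [hf0] using (hf.eventually_left_inverse hf').self_of_nhds
  have hmul : Tendsto (fun v => a * ψ v) (𝓝 0) (𝓝 0) := by
    simpa [hψ0] using hψ.tendsto.const_mul a
  filter_upwards [hmul.eventually (hf.eventually_left_inverse hf'),
    hf0 ▸ hf.eventually_right_inverse hf'] with v hleft hright
  have hPv : P v = f (a * ψ v) := (congrArg P hright).symm.trans (hsemi _).symm
  rw [hPv]
  exact hleft

theorem Function.Semiconj.apply_eq_of_tendsto_pow_mul {f P : 𝕜 → 𝕜} {a z : 𝕜} {x : ℕ → 𝕜}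
    (hsemi : Semiconj f (a * ·) P) (hf : HasStrictDerivAt f 1 0) (hf0 : f 0 = 0)
    (ha : 1 < ‖a‖) (hx : ∀ n, P (x (n + 1)) = x n)
    (hlim : Tendsto (fun n => a ^ n * x n) atTop (𝓝 z)) : f z = x 0 := by
  set ψ := hf.localInverse f 1 0 one_ne_zero
  have hψ : HasDerivAt ψ 1 0 := by
    simpa [hf0] using (hf.to_localInverse one_ne_zero).hasDerivAt
  have hψ0 : ψ 0 = 0 := by
    simpa [hf0] using (hf.eventually_left_inverse one_ne_zero).self_of_nhds
  have hx0 : Tendsto x atTop (𝓝 0) := by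
    have ha0 : a ≠ 0 := norm_pos_iff.1 (by linarith)
    simpa [ha0] using (tendsto_inv_pow_atTop_nhds_zero_of_one_lt_norm ha).mul hlim
  have hu_lim : Tendsto (fun n => a ^ n * ψ (x n)) atTop (𝓝 z) := by
    simpa using hψ.tendsto_smul_comp_of_tendsto_mul hψ0 hx0 hlim
  -- `ψ` conjugates `P` to `v ↦ a * v` near `0`, so `aⁿ ψ(xₙ)` is eventually constant.
  have hu_const : EventuallyConst (fun n => a ^ n * ψ (x n)) atTop := by
    obtain ⟨N, hN⟩ := eventually_atTop.1
      (hx0.eventually (hf.eventually_localInverse_apply_eq_mul one_ne_zero hf0 hsemi))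
    refine eventuallyConst_atTop_nat.2 ⟨N, fun n hn => ?_⟩
    have hconj : ψ (P (x (n + 1))) = a * ψ (x (n + 1)) := hN (n + 1) (by omega)
    rw [hx] at hconj
    rw [hconj, pow_succ]
    ring
  obtain ⟨n, hun, hfψ⟩ := ((hu_const.eventually_eq_of_tendsto hu_lim).and
    (hx0.eventually (hf0 ▸ hf.eventually_right_inverse one_ne_zero))).exists
  calc f z = f (a ^ n * ψ (x n)) := by rw [hun]
    _ = P^[n] (f (ψ (x n))) := by rw [← mul_left_iterate_apply, (hsemi.iterate_right n).eq]
    _ = x 0 := by rw [hfψ, iterate_apply_eq_of_apply_succ_eq hx]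

end

theorem poincare_level_sets_backward_orbits_general
    (p : Polynomial ℝ) (lam : ℝ)
    (hlam : 1 < lam)
    (Φ : ℂ → ℂ) (hΦ : Differentiable ℂ Φ)
    (hfe : ∀ z : ℂ, Φ (lam * z) = Polynomial.aeval (Φ z) p)
    (hΦ0 : Φ 0 = 0) (hΦ'0 : deriv Φ 0 = 1) :
    (∀ (w z : ℂ) (zseq : ℕ → ℂ), zseq 0 = w →
        (∀ n : ℕ, Polynomial.aeval (zseq (n + 1)) p = zseq n) →
        Tendsto (fun n : ℕ => (lam : ℂ) ^ n * zseq n) atTop (nhds z) →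
        Φ z = w) ∧
    (∀ w z : ℂ, Φ z = w →
        Φ (((lam : ℂ) ^ (0 : ℕ))⁻¹ * z) = w ∧
        (∀ n : ℕ, Polynomial.aeval (Φ (((lam : ℂ) ^ (n + 1))⁻¹ * z)) p
          = Φ (((lam : ℂ) ^ n)⁻¹ * z)) ∧
        Tendsto (fun n : ℕ => (lam : ℂ) ^ n * Φ (((lam : ℂ) ^ n)⁻¹ * z))
          atTop (nhds z)) := by
  have hsemi : Semiconj Φ ((lam : ℂ) * ·) (fun u => Polynomial.aeval u p) := hfe
  have hstrict : HasStrictDerivAt Φ 1 0 := hΦ'0 ▸ (hΦ.analyticAt 0).hasStrictDerivAt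
  have hnorm : 1 < ‖(lam : ℂ)‖ := by
    rwa [Complex.norm_real, Real.norm_of_nonneg (by linarith)]
  refine ⟨fun w z zseq h0 hrec hlim => h0 ▸ hsemi.apply_eq_of_tendsto_pow_mul hstrict hΦ0 hnorm
    hrec hlim, fun w z hw => ⟨by simpa using hw, fun n => ?_,
    hstrict.hasDerivAt.tendsto_pow_mul_comp_inv_pow_mul hΦ0 hnorm z⟩⟩
  have hlam0 : (lam : ℂ) ≠ 0 := by exact_mod_cast (by linarith : lam ≠ 0)
  rw [← hfe]
  congr 1
  field_simp
  ring

/-- Lemma 5 of the paper, reformulated. The solutions of `Φ(z) = w` are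
exactly the limits of the rescaled backward orbits `(λⁿ zₙ)` of `w` under `p`:
(i) if `z₀ = w`, `p(z_{n+1}) = z_n` and `λⁿ zₙ → z`, then `Φ(z) = w`;
(ii) if `Φ(z) = w` then `zₙ := Φ(λ^{−n} z)` is such a backward orbit with `λⁿ zₙ → z`. -/
theorem poincare_level_sets_backward_orbits
    (p : Polynomial ℝ) (d : ℕ) (lam : ℝ)
    (hd : 2 ≤ d) (hdeg : p.natDegree = d)
    (hc0 : p.coeff 0 = 0) (hc1 : p.coeff 1 = lam) (hlam : 1 < lam)
    (Φ : ℂ → ℂ) (hΦ : Differentiable ℂ Φ)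
    (hfe : ∀ z : ℂ, Φ (lam * z) = Polynomial.aeval (Φ z) p)
    (hΦ0 : Φ 0 = 0) (hΦ'0 : deriv Φ 0 = 1) :
    (∀ (w z : ℂ) (zseq : ℕ → ℂ), zseq 0 = w →
        (∀ n : ℕ, Polynomial.aeval (zseq (n + 1)) p = zseq n) →
        Tendsto (fun n : ℕ => (lam : ℂ) ^ n * zseq n) atTop (nhds z) →
        Φ z = w) ∧
    (∀ w z : ℂ, Φ z = w →
        Φ (((lam : ℂ) ^ (0 : ℕ))⁻¹ * z) = w ∧
        (∀ n : ℕ, Polynomial.aeval (Φ (((lam : ℂ) ^ (n + 1))⁻¹ * z)) p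
          = Φ (((lam : ℂ) ^ n)⁻¹ * z)) ∧
        Tendsto (fun n : ℕ => (lam : ℂ) ^ n * Φ (((lam : ℂ) ^ n)⁻¹ * z))
          atTop (nhds z)) :=
  poincare_level_sets_backward_orbits_general p lam hlam Φ hΦ hfe hΦ0 hΦ'0
end

section
/- For every integer k ≥ 0 and every complex number s with −k−1 < Re s < −k, the integral ∫₀^∞ ( log(1+x) − x + x²/2 − ⋯ + (−1)^k x^k/k ) x^{s−1} dx (i.e. ∫₀^∞ ( log(1+x) − Σ_{j=1}^{k} (−1)^{j−1} x^j / j ) x^{s−1} dx) converges and equals π / (s·sin(πs)). -/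
/-!
Write `F_k(x) = log(1+x) - ∑_{j<k} (-1)^j x^{j+1}/(j+1)`. Then `F_k(0) = 0` and
`F_k'(x) = (-x)^k/(1+x)`, so `|F_k(x)| ≤ x^{k+ε}/(k+ε)` for every `0 < ε ≤ 1`. These bounds make the
Mellin integral converge in the strip `-k-1 < Re s < -k`, and they kill the boundary terms when we
integrate by parts against `x^s/s`. What is left is `-((-1)^k/s) ∫₀^∞ x^{a-1}/(1+x) dx` with
`a = k+1+s`. The substitution `x = t/(1-t)` turns this integral into the Beta integral
`B(a, 1-a) = Γ(a) Γ(1-a) = π / sin(πa)`, and `sin(πa) = -(-1)^k sin(πs)`.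
-/

open Filter Topology MeasureTheory Set Asymptotics

noncomputable def logTaylorRemainder (k : ℕ) (x : ℝ) : ℝ :=
  Real.log (1 + x) - ∑ j ∈ Finset.range k, (-1 : ℝ) ^ j * x ^ (j + 1) / (j + 1)

@[simp]
lemma logTaylorRemainder_apply_zero (k : ℕ) : logTaylorRemainder k 0 = 0 := by
  simp [logTaylorRemainder]

lemma hasDerivAt_logTaylorRemainder (k : ℕ) {x : ℝ} (hx : 0 < 1 + x) :
    HasDerivAt (logTaylorRemainder k) ((-x) ^ k / (1 + x)) x := by
  have hlog : HasDerivAt (fun y ↦ Real.log (1 + y)) (1 / (1 + x)) x := by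
    simpa using ((hasDerivAt_id x).const_add 1).log hx.ne'
  have hpoly : HasDerivAt (fun y ↦ ∑ j ∈ Finset.range k, (-1 : ℝ) ^ j * y ^ (j + 1) / (j + 1))
      (∑ j ∈ Finset.range k, (-x) ^ j) x := by
    refine HasDerivAt.fun_sum fun j _ ↦ ?_
    refine (((hasDerivAt_pow (j + 1) x).const_mul ((-1 : ℝ) ^ j)).div_const
      ((j : ℝ) + 1)).congr_deriv ?_
    push_cast
    field_simp
    ring
  refine (hlog.sub hpoly).congr_deriv ?_
  have hgeom := mul_neg_geom_sum (-x) k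
  field_simp
  linear_combination -hgeom

lemma Real.rpow_le_one_add {t ε : ℝ} (ht : 0 ≤ t) (hε0 : 0 ≤ ε) (hε1 : ε ≤ 1) : t ^ ε ≤ 1 + t :=
  calc t ^ ε ≤ (1 + t) ^ ε := Real.rpow_le_rpow ht (by linarith) hε0
    _ ≤ (1 + t) ^ (1 : ℝ) := Real.rpow_le_rpow_of_exponent_le (by linarith) hε1
    _ = 1 + t := Real.rpow_one _

lemma abs_logTaylorRemainder_le (k : ℕ) {ε x : ℝ} (hε0 : 0 < ε) (hε1 : ε ≤ 1) (hx : 0 ≤ x) :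
    |logTaylorRemainder k x| ≤ x ^ (k + ε) / (k + ε) := by
  have hderiv : ∀ t ∈ uIcc 0 x, HasDerivAt (logTaylorRemainder k) ((-t) ^ k / (1 + t)) t :=
    fun t ht ↦ hasDerivAt_logTaylorRemainder k (by rw [uIcc_of_le hx] at ht; linarith [ht.1])
  have hpointwise : ∀ t ∈ Ioc 0 x, ‖(-t) ^ k / (1 + t)‖ ≤ t ^ (k - 1 + ε) := by
    rintro t ⟨ht, -⟩
    rw [norm_div, norm_pow, norm_neg, Real.norm_of_nonneg ht.le,
      Real.norm_of_nonneg (by linarith), div_le_iff₀ (by linarith)]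
    calc t ^ k = t ^ ((k : ℝ) - 1 + ε) * t ^ (1 - ε) := by
          rw [← Real.rpow_add ht, ← Real.rpow_natCast]; ring_nf
      _ ≤ t ^ ((k : ℝ) - 1 + ε) * (1 + t) := by
          gcongr; exact Real.rpow_le_one_add ht.le (by linarith) (by linarith)
  have hint : IntervalIntegrable (fun t : ℝ ↦ t ^ ((k : ℝ) - 1 + ε)) volume 0 x :=
    intervalIntegral.intervalIntegrable_rpow' (by linarith)
  calc |logTaylorRemainder k x| = ‖∫ t in 0..x, (-t) ^ k / (1 + t)‖ := by
        rw [intervalIntegral.integral_eq_sub_of_hasDerivAt hderiv ?_, logTaylorRemainder_apply_zero,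
          sub_zero, Real.norm_eq_abs]
        refine (ContinuousOn.div (by fun_prop) (by fun_prop) fun t ht ↦ ?_).intervalIntegrable
        rw [uIcc_of_le hx] at ht
        linarith [ht.1]
    _ ≤ ∫ t in 0..x, t ^ ((k : ℝ) - 1 + ε) :=
        intervalIntegral.norm_integral_le_of_norm_le hx (ae_of_all _ hpointwise) hint
    _ = x ^ (k + ε) / (k + ε) := by
        rw [integral_rpow (Or.inl (by linarith)), Real.zero_rpow (by ring_nf; linarith)]
        ring_nf

lemma logTaylorRemainder_isBigO_rpow (k : ℕ) {ε : ℝ} (hε0 : 0 < ε) (hε1 : ε ≤ 1)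
    {l : Filter ℝ} (hl : ∀ᶠ x in l, 0 ≤ x) :
    (fun x ↦ (logTaylorRemainder k x : ℂ)) =O[l] (· ^ ((k : ℝ) + ε)) := by
  refine IsBigO.of_bound ((k : ℝ) + ε)⁻¹ ?_
  filter_upwards [hl] with x hx
  rw [Complex.norm_real, Real.norm_eq_abs, Real.norm_of_nonneg (by positivity), ← div_eq_inv_mul]
  exact abs_logTaylorRemainder_le k hε0 hε1 hx

lemma integrableOn_logTaylorRemainder_mul_cpow {k : ℕ} {s : ℂ} (h₁ : -(k + 1 : ℝ) < s.re)
    (h₂ : s.re < -(k : ℝ)) :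
    IntegrableOn (fun x : ℝ ↦ (logTaylorRemainder k x : ℂ) * (x : ℂ) ^ (s - 1)) (Ioi 0) := by
  have hcont : ContinuousOn (fun x ↦ (logTaylorRemainder k x : ℂ)) (Ioi 0) := fun x hx ↦
    (hasDerivAt_logTaylorRemainder k (by linarith [mem_Ioi.mp hx])).ofReal_comp.continuousAt
      |>.continuousWithinAt
  obtain ⟨ε, hε0, hε1, hεs⟩ : ∃ ε : ℝ, 0 < ε ∧ ε ≤ 1 ∧ s.re < -(k + ε) :=
    ⟨(-k - s.re) / 2, by linarith, by linarith, by linarith⟩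
  have hmellin : MellinConvergent (fun x ↦ (logTaylorRemainder k x : ℂ)) s := by
    refine mellinConvergent_of_isBigO_rpow (a := -(k + ε)) (b := -(k + 1))
      (hcont.locallyIntegrableOn measurableSet_Ioi) ?_ hεs ?_ (by linarith)
    · simpa only [neg_neg] using logTaylorRemainder_isBigO_rpow k hε0 hε1 (eventually_ge_atTop 0)
    · simpa only [neg_neg] using logTaylorRemainder_isBigO_rpow k one_pos le_rfl
        (eventually_nhdsWithin_of_forall (s := Ioi 0) fun _ hx ↦ le_of_lt hx)
  exact hmellin.congr_fun (fun x _ ↦ (smul_eq_mul _ _).trans (mul_comm _ _)) measurableSet_Ioi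

lemma tendsto_mul_cpow_of_isBigO_rpow {f : ℝ → ℂ} {l : Filter ℝ} {a : ℝ} {s : ℂ}
    (hf : f =O[l] (· ^ a)) (hl : ∀ᶠ x in l, 0 < x) (hlim : Tendsto (· ^ (a + s.re)) l (𝓝 0)) :
    Tendsto (fun x ↦ f x * (x : ℂ) ^ s) l (𝓝 0) := by
  have hcpow : (fun x : ℝ ↦ (x : ℂ) ^ s) =O[l] (· ^ s.re) := by
    refine IsBigO.of_bound 1 ?_
    filter_upwards [hl] with x hx
    rw [Complex.norm_cpow_eq_rpow_re_of_pos hx, Real.norm_of_nonneg (by positivity), one_mul]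
  refine (hf.mul hcpow).trans_tendsto (hlim.congr' ?_)
  filter_upwards [hl] with x hx using Real.rpow_add hx _ _

lemma tendsto_logTaylorRemainder_mul_cpow_nhdsGT_zero {k : ℕ} {s : ℂ}
    (h₁ : -(k + 1 : ℝ) < s.re) :
    Tendsto (fun x : ℝ ↦ (logTaylorRemainder k x : ℂ) * (x : ℂ) ^ s) (𝓝[>] 0) (𝓝 0) := by
  refine tendsto_mul_cpow_of_isBigO_rpow (logTaylorRemainder_isBigO_rpow k one_pos le_rfl
    (eventually_nhdsWithin_of_forall fun _ hx ↦ le_of_lt hx)) self_mem_nhdsWithin ?_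
  exact (tendsto_id.mono_left nhdsWithin_le_nhds).rpow_const_nhds_zero (by linarith)

lemma tendsto_logTaylorRemainder_mul_cpow_atTop {k : ℕ} {s : ℂ} (h₂ : s.re < -(k : ℝ)) :
    Tendsto (fun x : ℝ ↦ (logTaylorRemainder k x : ℂ) * (x : ℂ) ^ s) atTop (𝓝 0) := by
  obtain ⟨ε, hε0, hε1, hεs⟩ : ∃ ε : ℝ, 0 < ε ∧ ε ≤ 1 ∧ (k : ℝ) + ε + s.re < 0 :=
    ⟨min 1 ((-k - s.re) / 2), lt_min one_pos (by linarith), min_le_left _ _,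
      by linarith [min_le_right 1 ((-k - s.re) / 2)]⟩
  refine tendsto_mul_cpow_of_isBigO_rpow (logTaylorRemainder_isBigO_rpow k hε0 hε1
    (eventually_ge_atTop 0)) (eventually_gt_atTop 0) ?_
  simpa using tendsto_rpow_neg_atTop (neg_pos.mpr hεs)

lemma image_div_one_sub_Ioo : (fun t : ℝ ↦ t / (1 - t)) '' Ioo 0 1 = Ioi 0 := by
  ext y
  constructor
  · rintro ⟨t, ⟨ht0, ht1⟩, rfl⟩
    exact div_pos ht0 (by linarith)
  · intro hy
    have hy : (0 : ℝ) < y := hy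
    refine ⟨y / (1 + y), ⟨by positivity, by rw [div_lt_one (by linarith)]; linarith⟩, ?_⟩
    field_simp
    ring

lemma injOn_div_one_sub : InjOn (fun t : ℝ ↦ t / (1 - t)) (Ioo 0 1) := by
  rintro a ⟨-, ha⟩ b ⟨-, hb⟩ h
  rw [div_eq_div_iff (by linarith) (by linarith)] at h
  linarith

lemma hasDerivAt_div_one_sub {t : ℝ} (ht : t ≠ 1) :
    HasDerivAt (fun t : ℝ ↦ t / (1 - t)) ((1 - t) ^ 2)⁻¹ t := by
  have ht : 1 - t ≠ 0 := sub_ne_zero.mpr ht.symm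
  refine ((hasDerivAt_id t).div ((hasDerivAt_id t).const_sub 1) ht).congr_deriv ?_
  simp only [id]
  field_simp
  ring

lemma abs_smul_cpow_div_one_add_div_one_sub {a : ℂ} {t : ℝ} (ht : t ∈ Ioo 0 1) :
    |((1 - t) ^ 2)⁻¹| • (((t / (1 - t) : ℝ) : ℂ) ^ (a - 1) / (1 + ((t / (1 - t) : ℝ) : ℂ)))
      = (t : ℂ) ^ (a - 1) * (1 - (t : ℂ)) ^ (1 - a - 1) := by
  obtain ⟨ht0, ht1⟩ := ht
  set u : ℝ := 1 - t with hu
  have hu0 : 0 < u := by linarith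
  have hu' : (1 : ℂ) - t = u := by push_cast [hu]; ring
  have hux : (u : ℂ) ≠ 0 := by exact_mod_cast hu0.ne'
  have hua : (u : ℂ) ^ (a - 1) ≠ 0 := Complex.cpow_ne_zero_iff.mpr (Or.inl hux)
  have hexp : (u : ℂ) ^ (1 - a - 1) = ((u : ℂ) ^ (a - 1))⁻¹ * (u : ℂ)⁻¹ := by
    rw [show 1 - a - 1 = -(a - 1) - 1 by ring, Complex.cpow_sub _ _ hux, Complex.cpow_neg,
      Complex.cpow_one, div_eq_mul_inv]
  have hdenom : 1 + (t : ℂ) / u = (u : ℂ)⁻¹ := by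
    field_simp
    push_cast [hu]
    ring
  rw [hu', hexp, abs_of_pos (by positivity), Complex.real_smul, Complex.ofReal_div, hdenom,
    Complex.div_cpow_ofReal_nonneg ht0.le hu0.le]
  push_cast
  field_simp

theorem integrableOn_cpow_div_one_add {a : ℂ} (ha0 : 0 < a.re) (ha1 : a.re < 1) :
    IntegrableOn (fun x : ℝ ↦ (x : ℂ) ^ (a - 1) / (1 + x)) (Ioi 0) := by
  have hbeta : IntegrableOn (fun t : ℝ ↦ (t : ℂ) ^ (a - 1) * (1 - (t : ℂ)) ^ (1 - a - 1))
      (Ioo 0 1) := by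
    rw [← integrableOn_Ioc_iff_integrableOn_Ioo,
      ← intervalIntegrable_iff_integrableOn_Ioc_of_le zero_le_one]
    exact Complex.betaIntegral_convergent ha0 (by simpa using ha1)
  rw [← image_div_one_sub_Ioo, integrableOn_image_iff_integrableOn_abs_deriv_smul
    measurableSet_Ioo (fun t ht ↦ (hasDerivAt_div_one_sub ht.2.ne).hasDerivWithinAt)
    injOn_div_one_sub]
  exact hbeta.congr_fun (fun t ht ↦ (abs_smul_cpow_div_one_add_div_one_sub ht).symm)
    measurableSet_Ioo

theorem integral_cpow_div_one_add {a : ℂ} (ha0 : 0 < a.re) (ha1 : a.re < 1) :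
    ∫ x in Ioi (0 : ℝ), (x : ℂ) ^ (a - 1) / (1 + x) = Real.pi / Complex.sin (Real.pi * a) := by
  have hbeta : Complex.betaIntegral a (1 - a) = Real.pi / Complex.sin (Real.pi * a) := by
    rw [← Complex.Gamma_mul_Gamma_one_sub, Complex.Gamma_mul_Gamma_eq_betaIntegral ha0
      (by simpa using ha1), add_sub_cancel, Complex.Gamma_one, one_mul]
  rw [← hbeta, ← image_div_one_sub_Ioo, integral_image_eq_integral_abs_deriv_smul
    measurableSet_Ioo (fun t ht ↦ (hasDerivAt_div_one_sub ht.2.ne).hasDerivWithinAt)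
    injOn_div_one_sub, setIntegral_congr_fun measurableSet_Ioo
    (fun t ht ↦ abs_smul_cpow_div_one_add_div_one_sub ht), Complex.betaIntegral,
    intervalIntegral.integral_of_le zero_le_one, integral_Ioc_eq_integral_Ioo]

lemma integral_logTaylorRemainder_mul_cpow {k : ℕ} {s : ℂ} (h₁ : -(k + 1 : ℝ) < s.re)
    (h₂ : s.re < -(k : ℝ)) :
    ∫ x in Ioi (0 : ℝ), (logTaylorRemainder k x : ℂ) * (x : ℂ) ^ (s - 1) =
      -((-1) ^ k / s) * (Real.pi / Complex.sin (Real.pi * (k + 1 + s))) := by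
  have hs : s ≠ 0 := by
    rintro rfl
    simp only [Complex.zero_re] at h₂
    linarith [k.cast_nonneg (α := ℝ)]
  have hu : ∀ x ∈ Ioi (0 : ℝ), HasDerivAt (fun x ↦ (logTaylorRemainder k x : ℂ))
      (((-x) ^ k / (1 + x) : ℝ) : ℂ) x := fun x hx ↦
    (hasDerivAt_logTaylorRemainder k (by linarith [mem_Ioi.mp hx])).ofReal_comp
  have hv : ∀ x ∈ Ioi (0 : ℝ), HasDerivAt (fun x : ℝ ↦ (x : ℂ) ^ s / s) ((x : ℂ) ^ (s - 1)) x :=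
    fun x hx ↦ by
      simpa using hasDerivAt_ofReal_cpow_const' (ne_of_gt hx) (r := s - 1)
        (by rwa [Ne, sub_eq_neg_self])
  have hu'v : ∀ x ∈ Ioi (0 : ℝ), (((-x) ^ k / (1 + x) : ℝ) : ℂ) * ((x : ℂ) ^ s / s) =
      (-1) ^ k / s * ((x : ℂ) ^ (k + 1 + s - 1) / (1 + x)) := by
    intro x hx
    rw [show (k : ℂ) + 1 + s - 1 = k + s by ring,
      Complex.cpow_add _ _ (by exact_mod_cast (ne_of_gt hx)), Complex.cpow_natCast]
    push_cast
    ring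
  have hre : ((k : ℂ) + 1 + s).re = k + 1 + s.re := by simp
  have ha0 : 0 < ((k : ℂ) + 1 + s).re := by rw [hre]; linarith
  have ha1 : ((k : ℂ) + 1 + s).re < 1 := by rw [hre]; linarith
  have hzero := (tendsto_logTaylorRemainder_mul_cpow_nhdsGT_zero h₁).div_const s
  have htop := (tendsto_logTaylorRemainder_mul_cpow_atTop h₂).div_const s
  simp only [zero_div, mul_div_assoc] at hzero htop
  rw [integral_Ioi_mul_deriv_eq_deriv_mul hu hv ?_ ?_ hzero htop,
    setIntegral_congr_fun measurableSet_Ioi hu'v, integral_const_mul,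
    integral_cpow_div_one_add ha0 ha1, sub_self, zero_sub, neg_mul]
  · exact integrableOn_logTaylorRemainder_mul_cpow h₁ h₂
  · exact IntegrableOn.congr_fun ((integrableOn_cpow_div_one_add ha0 ha1).const_mul _)
      (fun x hx ↦ (hu'v x hx).symm) measurableSet_Ioi

/-- For every integer `k ≥ 0` and `s ∈ ℂ` with `−k−1 < Re s < −k`,
`∫₀^∞ (log(1+x) − x + x²/2 − ⋯ + (−1)^k x^k/k) x^{s−1} dx = π/(s sin(πs))`. -/
theorem mellin_log_one_add_eq_pi_div_sin
    (k : ℕ) (s : ℂ) (h₁ : -(k + 1 : ℝ) < s.re) (h₂ : s.re < -(k : ℝ)) :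
    IntegrableOn
      (fun x : ℝ =>
        ((Real.log (1 + x)
            - ∑ j ∈ Finset.range k, (-1 : ℝ) ^ j * x ^ (j + 1) / (j + 1) : ℝ) : ℂ)
          * (x : ℂ) ^ (s - 1))
      (Set.Ioi (0 : ℝ)) ∧
    (∫ x in Set.Ioi (0 : ℝ),
        ((Real.log (1 + x)
            - ∑ j ∈ Finset.range k, (-1 : ℝ) ^ j * x ^ (j + 1) / (j + 1) : ℝ) : ℂ)
          * (x : ℂ) ^ (s - 1))
      = (Real.pi : ℂ) / (s * Complex.sin (Real.pi * s)) := by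
  have hsin : Complex.sin (Real.pi * (k + 1 + s)) = -(-1) ^ k * Complex.sin (Real.pi * s) := by
    rw [show (Real.pi : ℂ) * (k + 1 + s) = Real.pi * s + (k + 1 : ℕ) * Real.pi by push_cast; ring,
      Complex.sin_antiperiodic.add_nat_mul_eq, pow_succ]
    ring
  refine ⟨integrableOn_logTaylorRemainder_mul_cpow h₁ h₂, ?_⟩
  change ∫ x in Ioi (0 : ℝ), (logTaylorRemainder k x : ℂ) * (x : ℂ) ^ (s - 1) = _
  rw [integral_logTaylorRemainder_mul_cpow h₁ h₂, hsin, neg_mul, neg_mul, div_neg, mul_neg,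
    neg_neg, div_mul_div_comm, mul_left_comm s,
    mul_div_mul_left _ _ (pow_ne_zero k (neg_ne_zero.mpr one_ne_zero))]
end
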